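/- arXiv:1710.07002 — 6 statements merged into one kernel-verified Lean document; each statement's English description precedes it below -/
import Mathlib

section
/- For every positive integer m, the number of normalized 2m-tuples ω with |E(ω)| = m and |V(ω)| = m + 1 equals the Catalan number Catalan(m) = (1/(m+1))·binom(2m, m). -/
/-!
A tuple counted by the theorem is a closed walk `1 = x 0, x 1, …, x (2m) = x 0` which visits the
labels `1, …, m + 1` in increasing order of first visit and uses exactly `m` distinct edges.
Let `parent v` be the vertex from which `v` is first entered. The `m` edges `{v, parent v}`,
`v ≥ 2`, are distinct and all used, so they are all the edges: the walk tours a tree. Every vertex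
`v ≥ 2`, once entered, is later left towards its parent; as the walk has only `2m` steps, each
edge is crossed exactly once in each direction, first away from the root. Hence writing `U` for
the steps that enter a new vertex and `D` for the others gives a Dyck word of semilength `m`, and
the walk is recovered from that word by a depth-first exploration with a stack. So the tuples are
in bijection with the `catalan m` Dyck words of semilength `m`.
-/

open MeasureTheory ProbabilityTheory Filter Matrix
open scoped ENNReal

noncomputable section
/-- The cyclic successor on `Fin k` (so that index `k` wraps around to `1`). -/
def cyclicSucc {k : ℕ} (j : Fin k) : Fin k :=
  ⟨(j.1 + 1) % k, Nat.mod_lt _ (Nat.lt_of_le_of_lt (Nat.zero_le _) j.isLt)⟩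

/-- A `k`-tuple of positive integers is *admissible* if cyclically consecutive entries
differ (`i_1 ≠ i_2, …, i_{k-1} ≠ i_k, i_k ≠ i_1`). -/
def Admissible {k : ℕ} (t : Fin k → ℕ) : Prop :=
  (∀ j, 0 < t j) ∧ ∀ j : Fin k, t j ≠ t (cyclicSucc j)

/-- A `k`-tuple is *normalized* if it is admissible and each entry `> 1` is preceded by an
entry equal to it minus one. -/
def Normalized {k : ℕ} (t : Fin k → ℕ) : Prop :=
  Admissible t ∧ ∀ j : Fin k, 1 < t j → ∃ j' : Fin k, j' < j ∧ t j' = t j - 1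

/-- `E(ω)`: the set of unordered pairs `{i_j, i_{j+1}}` (with the cyclic convention
`i_{k+1} = i_1`) of the closed walk associated to the tuple. -/
def edgeSet {k : ℕ} (t : Fin k → ℕ) : Finset (Sym2 ℕ) :=
  Finset.image (fun j : Fin k => s(t j, t (cyclicSucc j))) Finset.univ

/-- `V(ω)`: the set of entries of the tuple. -/
def vertexSet {k : ℕ} (t : Fin k → ℕ) : Finset ℕ :=
  Finset.image t Finset.univ

open Finset DyckStep

section FirstVisit

variable (x : ℕ → ℕ)

-- `firstVisit x v = 0` when `v` is never visited (`sInf ∅ = 0`); the lemmas assume a visit.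
def firstVisit (v : ℕ) : ℕ := sInf {i | x i = v}

def parent (v : ℕ) : ℕ := x (firstVisit x v - 1)

def IsNewStep (j : ℕ) : Prop := ∀ i ≤ j, x i ≠ x (j + 1)

def IsReturnStep (j : ℕ) : Prop := 2 ≤ x j ∧ x (j + 1) = parent x (x j)

instance : DecidablePred (IsNewStep x) := fun j =>
  inferInstanceAs (Decidable (∀ i ≤ j, x i ≠ x (j + 1)))

instance : DecidablePred (IsReturnStep x) := fun j =>
  inferInstanceAs (Decidable (2 ≤ x j ∧ x (j + 1) = parent x (x j)))

def newSteps (n : ℕ) : Finset ℕ := (range n).filter (IsNewStep x)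

def returnSteps (n : ℕ) : Finset ℕ := (range n).filter (IsReturnStep x)

def stepEdges (n : ℕ) : Finset (Sym2 ℕ) := (range n).image fun j => s(x j, x (j + 1))

def treeEdges (M : ℕ) : Finset (Sym2 ℕ) := (Icc 2 (M + 1)).image fun v => s(v, parent x v)

variable {x}

lemma firstVisit_le {i v : ℕ} (h : x i = v) : firstVisit x v ≤ i := Nat.sInf_le h

lemma firstVisit_apply_le (i : ℕ) : firstVisit x (x i) ≤ i := firstVisit_le rfl

lemma apply_firstVisit {v : ℕ} (hv : ∃ i, x i = v) : x (firstVisit x v) = v := Nat.sInf_mem hv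

lemma apply_ne_of_lt_firstVisit {i v : ℕ} (hi : i < firstVisit x v) : x i ≠ v :=
  Nat.notMem_of_lt_sInf (s := {i | x i = v}) hi

lemma firstVisit_pos {v : ℕ} (hv : ∃ i, x i = v) (h0 : x 0 ≠ v) : 0 < firstVisit x v :=
  Nat.pos_of_ne_zero fun h => h0 (h ▸ apply_firstVisit hv)

lemma firstVisit_parent_lt {v : ℕ} (hv : ∃ i, x i = v) (h0 : x 0 ≠ v) :
    firstVisit x (parent x v) < firstVisit x v :=
  (firstVisit_apply_le _).trans_lt (Nat.sub_lt (firstVisit_pos hv h0) one_pos)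

lemma firstVisit_le_of_eqOn {y : ℕ → ℕ} {j k : ℕ} (hxy : ∀ i ≤ j, x i = y i) (hk : k ≤ j) :
    firstVisit x (y k) ≤ firstVisit y (y k) :=
  Nat.sInf_le <| (hxy _ ((firstVisit_apply_le k).trans hk)).trans (apply_firstVisit ⟨k, rfl⟩)

lemma firstVisit_congr {y : ℕ → ℕ} {j k : ℕ} (hxy : ∀ i ≤ j, x i = y i) (hk : k ≤ j) :
    firstVisit x (x k) = firstVisit y (y k) := by
  have hk' := hxy k hk
  refine le_antisymm ?_ ?_
  · rw [hk']
    exact firstVisit_le_of_eqOn hxy hk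
  · rw [← hk']
    exact firstVisit_le_of_eqOn (fun i hi => (hxy i hi).symm) hk

lemma isNewStep_iff_notMem_image {j : ℕ} :
    IsNewStep x j ↔ x (j + 1) ∉ (range (j + 1)).image x := by
  simp [IsNewStep]

lemma isNewStep_congr {y : ℕ → ℕ} {j : ℕ} (hxy : ∀ i ≤ j + 1, x i = y i) :
    IsNewStep x j ↔ IsNewStep y j := by
  rw [isNewStep_iff_notMem_image, isNewStep_iff_notMem_image, hxy _ le_rfl,
    image_congr fun i hi => hxy i (by rw [coe_range, Set.mem_Iio] at hi; omega)]

lemma IsNewStep.firstVisit_eq {j : ℕ} (h : IsNewStep x j) :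
    firstVisit x (x (j + 1)) = j + 1 := by
  refine le_antisymm (firstVisit_apply_le _) (Nat.succ_le_of_lt ?_)
  by_contra! hle
  exact h _ hle (apply_firstVisit ⟨_, rfl⟩)

lemma IsNewStep.parent_eq {j : ℕ} (h : IsNewStep x j) : parent x (x (j + 1)) = x j := by
  simp [parent, h.firstVisit_eq]

lemma isNewStep_firstVisit_sub_one {v : ℕ} (hv : ∃ i, x i = v) (h0 : x 0 ≠ v) :
    IsNewStep x (firstVisit x v - 1) := by
  have hfv := firstVisit_pos hv h0
  intro i hi
  rw [Nat.sub_add_cancel hfv, apply_firstVisit hv]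
  exact apply_ne_of_lt_firstVisit (by omega)

lemma IsNewStep.not_isReturnStep {j : ℕ} (h : IsNewStep x j) (h0 : x 0 = 1) :
    ¬IsReturnStep x j := by
  rintro ⟨h2, hret⟩
  have hlt := firstVisit_parent_lt ⟨j, rfl⟩ (by omega : x 0 ≠ x j)
  rw [← hret, h.firstVisit_eq] at hlt
  have := firstVisit_apply_le (x := x) j
  omega

lemma disjoint_returnSteps_newSteps (h0 : x 0 = 1) (n : ℕ) :
    Disjoint (returnSteps x n) (newSteps x n) :=
  disjoint_filter.2 fun _ _ hret hnew => hnew.not_isReturnStep h0 hret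

lemma returnSteps_union_newSteps_subset (n : ℕ) : returnSteps x n ∪ newSteps x n ⊆ range n :=
  union_subset (filter_subset _ _) (filter_subset _ _)

lemma treeEdges_subset_stepEdges {M n : ℕ} (h0 : x 0 = 1)
    (hvis : ∀ v ∈ Icc 2 (M + 1), ∃ i < n, x i = v) : treeEdges x M ⊆ stepEdges x n := by
  intro e he
  obtain ⟨v, hv, rfl⟩ := mem_image.1 he
  obtain ⟨i, hi, hxi⟩ := hvis v hv
  have hv0 : x 0 ≠ v := by rw [mem_Icc] at hv; omega
  have hfv := firstVisit_pos ⟨i, hxi⟩ hv0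
  have hlt := (firstVisit_le hxi).trans_lt hi
  refine mem_image.2 ⟨firstVisit x v - 1, mem_range.2 (by omega), ?_⟩
  rw [Nat.sub_add_cancel hfv, apply_firstVisit ⟨i, hxi⟩]
  exact Sym2.eq_swap

lemma card_treeEdges {M : ℕ} (h0 : x 0 = 1) (hvis : ∀ v ∈ Icc 2 (M + 1), ∃ i, x i = v) :
    #(treeEdges x M) = M := by
  rw [treeEdges, card_image_of_injOn, Nat.card_Icc]
  · omega
  intro a ha b hb hab
  rw [coe_Icc, Set.mem_Icc] at ha hb
  -- `{v, parent v}` determines `v`, since `parent v` is first visited before `v`.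
  rcases Sym2.eq_iff.1 hab with ⟨h, -⟩ | ⟨hab, hba⟩
  · exact h
  · have ha' := firstVisit_parent_lt (hvis a (mem_Icc.2 ha)) (by omega)
    have hb' := firstVisit_parent_lt (hvis b (mem_Icc.2 hb)) (by omega)
    rw [hba] at ha'
    rw [← hab] at hb'
    omega

end FirstVisit

lemma exists_image_range_eq_Icc {x : ℕ → ℕ} {n : ℕ} (hpos : ∀ j < n, 0 < x j)
    (hpred : ∀ j < n, 1 < x j → ∃ i < j, x i = x j - 1) :
    ∀ k ≤ n, ∃ M, (range k).image x = Icc 1 M := by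
  intro k hk
  induction k with
  | zero => exact ⟨0, by simp⟩
  | succ k ih =>
    obtain ⟨M, hM⟩ := ih (by omega)
    rw [range_add_one, image_insert, hM]
    by_cases hmem : x k ∈ Icc 1 M
    · exact ⟨M, insert_eq_of_mem hmem⟩
    have hxk : x k = M + 1 := by
      have := hpos k (by omega)
      rw [mem_Icc] at hmem
      rcases (show x k = 1 ∨ 1 < x k by omega) with h1 | h1
      · omega
      obtain ⟨i, hi, hxi⟩ := hpred k (by omega) h1
      have : x i ∈ Icc 1 M := hM ▸ mem_image_of_mem x (mem_range.2 hi)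
      rw [mem_Icc] at this
      omega
    rw [hxk]
    exact ⟨M + 1, insert_Icc_right_eq_Icc_add_one (by omega)⟩

lemma count_U_map_range (p : ℕ → Prop) [DecidablePred p] (n : ℕ) :
    ((List.range n).map fun j => if p j then U else D).count U = #((range n).filter p) := by
  induction n with
  | zero => simp
  | succ n ih =>
    rw [List.range_succ, List.map_append, List.count_append, ih, range_add_one, filter_insert]
    by_cases h : p n <;> simp [h]

lemma count_D_map_range (p : ℕ → Prop) [DecidablePred p] (n : ℕ) :
    ((List.range n).map fun j => if p j then U else D).count D =
      #((range n).filter fun j => ¬p j) := by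
  induction n with
  | zero => simp
  | succ n ih =>
    rw [List.range_succ, List.map_append, List.count_append, ih, range_add_one, filter_insert]
    by_cases h : p n <;> simp [h]

lemma count_take_add_one (w : List DyckStep) (j : ℕ) (a : DyckStep) :
    (w.take (j + 1)).count a = (w.take j).count a + if w[j]? = some a then 1 else 0 := by
  rw [List.take_add_one, List.count_append]
  rcases w[j]? with _ | b
  · simp
  · by_cases hb : b = a <;> simp [hb]

/-- The hypotheses of the theorem on a tuple `ω`, read on the closed walk
`x 0, x 1, …, x (2 * m) = x 0`. Such a walk is the depth-first tour of a tree whose vertices are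
labelled in the order of their first visits. -/
structure IsTreeTour (m : ℕ) (x : ℕ → ℕ) : Prop where
  start : x 0 = 1
  finish : x (2 * m) = 1
  pos : ∀ j < 2 * m, 0 < x j
  adj : ∀ j < 2 * m, x j ≠ x (j + 1)
  pred_visited : ∀ j < 2 * m, 1 < x j → ∃ i < j, x i = x j - 1
  card_vertices : #((range (2 * m)).image x) = m + 1
  card_stepEdges : #(stepEdges x (2 * m)) = m

namespace IsTreeTour

variable {m : ℕ} {x : ℕ → ℕ}

lemma image_range (h : IsTreeTour m x) : (range (2 * m)).image x = Icc 1 (m + 1) := by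
  obtain ⟨M, hM⟩ := exists_image_range_eq_Icc h.pos h.pred_visited (2 * m) le_rfl
  have hcard := h.card_vertices
  rw [hM, Nat.card_Icc] at hcard
  rw [hM, show M = m + 1 by omega]

lemma ne_zero (h : IsTreeTour m x) : m ≠ 0 := by
  rintro rfl
  simpa using h.card_vertices

lemma exists_lt_apply_eq (h : IsTreeTour m x) {v : ℕ} (hv : v ∈ Icc 1 (m + 1)) :
    ∃ i < 2 * m, x i = v := by
  simpa [← h.image_range] using hv

lemma apply_mem_Icc (h : IsTreeTour m x) {j : ℕ} (hj : j ≤ 2 * m) : x j ∈ Icc 1 (m + 1) := by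
  rcases hj.lt_or_eq with hj | rfl
  · exact h.image_range ▸ mem_image_of_mem x (mem_range.2 hj)
  · simp [h.finish]

lemma stepEdges_eq_treeEdges (h : IsTreeTour m x) : stepEdges x (2 * m) = treeEdges x m := by
  have hvis : ∀ v ∈ Icc 2 (m + 1), ∃ i < 2 * m, x i = v := fun v hv =>
    h.exists_lt_apply_eq (Icc_subset_Icc_left one_le_two hv)
  refine (eq_of_subset_of_card_le (treeEdges_subset_stepEdges h.start hvis) ?_).symm
  rw [h.card_stepEdges, card_treeEdges h.start fun v hv => (hvis v hv).imp fun _ => And.right]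

lemma isReturnStep_or_parent_eq (h : IsTreeTour m x) {j : ℕ} (hj : j < 2 * m) :
    IsReturnStep x j ∨ 2 ≤ x (j + 1) ∧ x j = parent x (x (j + 1)) := by
  have he : s(x j, x (j + 1)) ∈ treeEdges x m :=
    h.stepEdges_eq_treeEdges ▸ mem_image_of_mem _ (mem_range.2 hj)
  obtain ⟨v, hv, he⟩ := mem_image.1 he
  rw [mem_Icc] at hv
  rcases Sym2.eq_iff.1 he with ⟨rfl, hpv⟩ | ⟨rfl, hpv⟩
  · exact Or.inl ⟨hv.1, hpv.symm⟩
  · exact Or.inr ⟨hv.1, hpv.symm⟩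

lemma exists_isReturnStep (h : IsTreeTour m x) {i : ℕ} (hi : i ≤ 2 * m) (h2 : 2 ≤ x i) :
    ∃ j, i ≤ j ∧ j < 2 * m ∧ x j = x i ∧ IsReturnStep x j := by
  have hi' : i < 2 * m := lt_of_le_of_ne hi (by rintro rfl; rw [h.finish] at h2; omega)
  by_cases hret : IsReturnStep x i
  · exact ⟨i, le_rfl, hi', rfl, hret⟩
  -- Otherwise the walk descends to a child, which it later leaves back to `x i`.
  obtain ⟨hc, hpc⟩ := (h.isReturnStep_or_parent_eq hi').resolve_left hret
  obtain ⟨j', hij', hj', hxj', hret'⟩ := h.exists_isReturnStep (i := i + 1) hi' hc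
  have hback : x (j' + 1) = x i := by rw [hret'.2, hxj', ← hpc]
  obtain ⟨j, hj'j, hj, hxj, hretj⟩ := h.exists_isReturnStep (i := j' + 1) hj' (hback ▸ h2)
  exact ⟨j, by omega, hj, hxj.trans hback, hretj⟩
termination_by 2 * m - i

lemma mapsTo_returnSteps (h : IsTreeTour m x) :
    Set.MapsTo x (returnSteps x (2 * m)) (Icc 2 (m + 1)) := by
  intro j hj
  rw [returnSteps, coe_filter, Set.mem_ofPred_eq, mem_range] at hj
  have := mem_Icc.1 (h.apply_mem_Icc hj.1.le)
  rw [coe_Icc, Set.mem_Icc]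
  exact ⟨hj.2.1, this.2⟩

lemma surjOn_returnSteps (h : IsTreeTour m x) :
    Set.SurjOn x (returnSteps x (2 * m)) (Icc 2 (m + 1)) := by
  intro v hv
  rw [coe_Icc, Set.mem_Icc] at hv
  obtain ⟨i, hi, rfl⟩ := h.exists_lt_apply_eq (mem_Icc.2 ⟨by omega, hv.2⟩)
  obtain ⟨j, -, hj, hxj, hret⟩ := h.exists_isReturnStep hi.le hv.1
  exact ⟨j, by simpa [returnSteps] using ⟨hj, hret⟩, hxj⟩

lemma surjOn_newSteps (h : IsTreeTour m x) :
    Set.SurjOn (fun j => x (j + 1)) (newSteps x (2 * m)) (Icc 2 (m + 1)) := by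
  intro v hv
  rw [coe_Icc, Set.mem_Icc] at hv
  obtain ⟨i, hi, hxi⟩ := h.exists_lt_apply_eq (mem_Icc.2 ⟨by omega, hv.2⟩)
  have h0 : x 0 ≠ v := by rw [h.start]; omega
  have hfv := firstVisit_pos ⟨i, hxi⟩ h0
  have hlt := (firstVisit_le hxi).trans_lt hi
  refine ⟨firstVisit x v - 1, ?_, ?_⟩
  · simpa [newSteps] using ⟨by omega, isNewStep_firstVisit_sub_one ⟨i, hxi⟩ h0⟩
  · simp only [Nat.sub_add_cancel hfv, apply_firstVisit ⟨i, hxi⟩]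

/-- Return steps and new steps are disjoint, and each kind reaches every vertex `v ≥ 2`. -/
lemma card_returnSteps_eq_and_card_newSteps_eq (h : IsTreeTour m x) :
    #(returnSteps x (2 * m)) = m ∧ #(newSteps x (2 * m)) = m := by
  have hR := card_le_card_of_surjOn x h.surjOn_returnSteps
  have hN := card_le_card_of_surjOn _ h.surjOn_newSteps
  have hle := card_le_card (returnSteps_union_newSteps_subset (x := x) (2 * m))
  rw [card_union_of_disjoint (disjoint_returnSteps_newSteps h.start _), card_range] at hle
  rw [Nat.card_Icc] at hR hN
  omega

lemma isReturnStep_of_not_isNewStep (h : IsTreeTour m x) {j : ℕ} (hj : j < 2 * m)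
    (hnew : ¬IsNewStep x j) : IsReturnStep x j := by
  obtain ⟨hR, hN⟩ := h.card_returnSteps_eq_and_card_newSteps_eq
  have hunion : returnSteps x (2 * m) ∪ newSteps x (2 * m) = range (2 * m) := by
    refine eq_of_subset_of_card_le (returnSteps_union_newSteps_subset _) ?_
    rw [card_union_of_disjoint (disjoint_returnSteps_newSteps h.start _), hR, hN, card_range]
    omega
  have hmem : j ∈ returnSteps x (2 * m) ∪ newSteps x (2 * m) := hunion ▸ mem_range.2 hj
  simp only [returnSteps, newSteps, mem_union, mem_filter, hnew, and_false, or_false] at hmem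
  exact hmem.2

lemma injOn_returnSteps (h : IsTreeTour m x) : Set.InjOn x (returnSteps x (2 * m)) :=
  injOn_of_surjOn_of_card_le x h.mapsTo_returnSteps h.surjOn_returnSteps
    (by rw [h.card_returnSteps_eq_and_card_newSteps_eq.1, Nat.card_Icc]; omega)

/-- Each return step is matched with the earlier step that first entered the same vertex. -/
lemma card_filter_not_isNewStep_le (h : IsTreeTour m x) {k : ℕ} (hk : k ≤ 2 * m) :
    #((range k).filter fun j => ¬IsNewStep x j) ≤ #((range k).filter (IsNewStep x)) := by
  have hret : ∀ j ∈ (range k).filter fun j => ¬IsNewStep x j,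
      j < k ∧ j ∈ returnSteps x (2 * m) ∧ x 0 ≠ x j := fun j hj => by
    rw [mem_filter, mem_range] at hj
    have hret := h.isReturnStep_of_not_isNewStep (by omega) hj.2
    refine ⟨hj.1, mem_filter.2 ⟨mem_range.2 (by omega), hret⟩, ?_⟩
    have := hret.1
    rw [h.start]
    omega
  refine card_le_card_of_injOn (fun j => firstVisit x (x j) - 1) (fun j hj => ?_) ?_
  · obtain ⟨hjk, -, h0⟩ := hret j hj
    have hfv := firstVisit_pos ⟨j, rfl⟩ h0
    have := firstVisit_apply_le (x := x) j
    simpa using ⟨by omega, isNewStep_firstVisit_sub_one ⟨j, rfl⟩ h0⟩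
  · intro i hi j hj hij
    obtain ⟨-, hiR, hi0⟩ := hret i hi
    obtain ⟨-, hjR, hj0⟩ := hret j hj
    have hfi := firstVisit_pos ⟨i, rfl⟩ hi0
    have hfj := firstVisit_pos ⟨j, rfl⟩ hj0
    refine h.injOn_returnSteps hiR hjR ?_
    calc x i = x (firstVisit x (x i)) := (apply_firstVisit ⟨i, rfl⟩).symm
      _ = x (firstVisit x (x j)) := congrArg x (by simp only at hij; omega)
      _ = x j := apply_firstVisit ⟨j, rfl⟩

lemma apply_succ_of_isNewStep (h : IsTreeTour m x) {j : ℕ} (hj : j < 2 * m)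
    (hnew : IsNewStep x j) : x (j + 1) = #((range (j + 1)).image x) + 1 := by
  have hne1 : x (j + 1) ≠ 1 := by
    have := hnew 0 (Nat.zero_le _)
    rwa [h.start, ne_comm] at this
  have hj1 : j + 1 < 2 * m := lt_of_le_of_ne hj fun hj1 => hne1 (hj1 ▸ h.finish)
  obtain ⟨M, hM⟩ := exists_image_range_eq_Icc h.pos h.pred_visited (j + 1) hj
  have hnot : x (j + 1) ∉ Icc 1 M := hM ▸ isNewStep_iff_notMem_image.1 hnew
  obtain ⟨i, hi, hxi⟩ := h.pred_visited (j + 1) hj1 (by have := h.pos _ hj1; omega)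
  have hxi' : x i ∈ Icc 1 M := hM ▸ mem_image_of_mem x (mem_range.2 hi)
  rw [hM, Nat.card_Icc]
  rw [mem_Icc] at hnot hxi'
  omega

lemma apply_succ_of_not_isNewStep (h : IsTreeTour m x) {j : ℕ} (hj : j < 2 * m)
    (hnew : ¬IsNewStep x j) : x (j + 1) = parent x (x j) :=
  (h.isReturnStep_of_not_isNewStep hj hnew).2

/-- A new vertex gets the next free label and any other step goes to the parent of the current
vertex, so each value is determined by the earlier ones. -/
lemma eqOn_of_isNewStep_iff (hx : IsTreeTour m x) {y : ℕ → ℕ} (hy : IsTreeTour m y)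
    (hxy : ∀ j < 2 * m, IsNewStep x j ↔ IsNewStep y j) : ∀ j ≤ 2 * m, x j = y j := by
  suffices ∀ j ≤ 2 * m, ∀ i ≤ j, x i = y i from fun j hj => this j hj j le_rfl
  intro j hj
  induction j with
  | zero => intro i hi; rw [Nat.le_zero.1 hi, hx.start, hy.start]
  | succ j ih =>
    have ih := ih (by omega)
    intro i hi
    rcases hi.lt_or_eq with hi | rfl
    · exact ih i (by omega)
    by_cases hnew : IsNewStep x j
    · rw [hx.apply_succ_of_isNewStep (by omega) hnew,
        hy.apply_succ_of_isNewStep (by omega) ((hxy j (by omega)).1 hnew),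
        image_congr fun i hi => ih i (Nat.lt_succ_iff.1 (mem_range.1 hi))]
    · rw [hx.apply_succ_of_not_isNewStep (by omega) hnew,
        hy.apply_succ_of_not_isNewStep (by omega) (mt (hxy j (by omega)).2 hnew),
        parent, parent, ← firstVisit_congr ih le_rfl]
      exact ih _ ((Nat.sub_le _ _).trans (firstVisit_apply_le j))

def dyckWord (h : IsTreeTour m x) : DyckWord where
  toList := (List.range (2 * m)).map fun j => if IsNewStep x j then U else D
  count_U_eq_count_D := by
    have := card_filter_add_card_filter_not (s := range (2 * m)) (p := IsNewStep x)
    rw [card_range, ← newSteps, h.card_returnSteps_eq_and_card_newSteps_eq.2] at this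
    rw [count_U_map_range, count_D_map_range, ← newSteps,
      h.card_returnSteps_eq_and_card_newSteps_eq.2]
    omega
  count_D_le_count_U i := by
    rw [← List.map_take, List.take_range, count_U_map_range, count_D_map_range]
    exact h.card_filter_not_isNewStep_le (min_le_right _ _)

lemma semilength_dyckWord (h : IsTreeTour m x) : h.dyckWord.semilength = m := by
  rw [DyckWord.semilength, dyckWord, count_U_map_range, ← newSteps,
    h.card_returnSteps_eq_and_card_newSteps_eq.2]

lemma getElem_dyckWord (h : IsTreeTour m x) {j : ℕ} (hj : j < h.dyckWord.toList.length) :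
    h.dyckWord.toList[j] = if IsNewStep x j then U else D := by
  simp [dyckWord]

end IsTreeTour

namespace DyckWord

variable (p : DyckWord)

/-- The stack of a depth-first exploration driven by `p`: `U` creates the next vertex label and
descends to it, `D` returns to the parent. -/
def stack : ℕ → List ℕ
  | 0 => [1]
  | j + 1 =>
    match p.toList[j]? with
    | some U => ((p.toList.take j).count U + 2) :: stack j
    | some D => (stack j).tail
    | none => stack j

def tour (j : ℕ) : ℕ := (p.stack j).headD 0

variable {p}

lemma stack_succ_of_U {j : ℕ} (h : p.toList[j]? = some U) :
    p.stack (j + 1) = ((p.toList.take j).count U + 2) :: p.stack j := by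
  simp [stack, h]

lemma stack_succ_of_D {j : ℕ} (h : p.toList[j]? = some D) :
    p.stack (j + 1) = (p.stack j).tail := by
  simp [stack, h]

lemma stack_succ_of_none {j : ℕ} (h : p.toList[j]? = none) : p.stack (j + 1) = p.stack j := by
  simp [stack, h]

lemma length_stack (j : ℕ) :
    (p.stack j).length + (p.toList.take j).count D = (p.toList.take j).count U + 1 := by
  induction j with
  | zero => simp [stack]
  | succ j ih =>
    rw [count_take_add_one, count_take_add_one]
    rcases h : p.toList[j]? with _ | ⟨_ | _⟩
    · simpa [stack_succ_of_none h] using ih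
    · simp only [stack_succ_of_U h, List.length_cons, Option.some.injEq, reduceCtorEq,
        if_true, if_false]
      omega
    · have := p.count_D_le_count_U (j + 1)
      simp only [count_take_add_one, h, Option.some.injEq, reduceCtorEq, if_true,
        if_false] at this
      simp only [stack_succ_of_D h, List.length_tail, Option.some.injEq, reduceCtorEq, if_true,
        if_false]
      omega

lemma exists_stack_eq_cons (j : ℕ) : ∃ l, p.stack j = p.tour j :: l := by
  have hlen := p.length_stack j
  have hle := p.count_D_le_count_U j
  rcases h : p.stack j with _ | ⟨a, l⟩
  · rw [h, List.length_nil] at hlen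
    omega
  · exact ⟨l, by rw [tour, h]; rfl⟩

lemma exists_stack_eq_of_D {j : ℕ} (h : p.toList[j]? = some D) :
    ∃ l, p.stack j = p.tour j :: p.tour (j + 1) :: l := by
  have hlen := p.length_stack j
  have hle := p.count_D_le_count_U (j + 1)
  simp only [count_take_add_one, h, Option.some.injEq, reduceCtorEq, if_true, if_false] at hle
  obtain ⟨l, hl⟩ := p.exists_stack_eq_cons j
  rcases l with _ | ⟨b, l⟩
  · rw [hl, List.length_singleton] at hlen
    omega
  · have hb : p.tour (j + 1) = b := by rw [tour, stack_succ_of_D h, hl]; rfl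
    exact ⟨l, hb ▸ hl⟩

lemma le_of_mem_stack {j v : ℕ} (hv : v ∈ p.stack j) :
    1 ≤ v ∧ v ≤ (p.toList.take j).count U + 1 := by
  induction j generalizing v with
  | zero => simp_all [stack]
  | succ j ih =>
    rw [count_take_add_one]
    rcases h : p.toList[j]? with _ | ⟨_ | _⟩
    · simpa using ih (by rwa [stack_succ_of_none h] at hv)
    · rw [stack_succ_of_U h, List.mem_cons] at hv
      rcases hv with rfl | hv
      · simp
      · have := ih hv
        simp only [if_true]
        omega
    · rw [stack_succ_of_D h] at hv
      simpa using ih (List.mem_of_mem_tail hv)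

lemma pairwise_stack (j : ℕ) : (p.stack j).Pairwise (· > ·) := by
  induction j with
  | zero => simp [stack]
  | succ j ih =>
    rcases h : p.toList[j]? with _ | ⟨_ | _⟩
    · rwa [stack_succ_of_none h]
    · rw [stack_succ_of_U h, List.pairwise_cons]
      exact ⟨fun v hv => by have := le_of_mem_stack hv; omega, ih⟩
    · rw [stack_succ_of_D h]
      exact ih.sublist (List.tail_sublist _)

lemma getLast?_stack (j : ℕ) : (p.stack j).getLast? = some 1 := by
  induction j with
  | zero => simp [stack]
  | succ j ih =>
    rcases h : p.toList[j]? with _ | ⟨_ | _⟩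
    · rwa [stack_succ_of_none h]
    · obtain ⟨l, hl⟩ := p.exists_stack_eq_cons j
      rw [stack_succ_of_U h, hl, List.getLast?_cons_cons, ← hl, ih]
    · obtain ⟨l, hl⟩ := p.exists_stack_eq_of_D h
      rw [stack_succ_of_D h, hl, List.tail_cons, ← List.getLast?_cons_cons, ← hl, ih]

lemma tour_mem_stack (j : ℕ) : p.tour j ∈ p.stack j := by
  obtain ⟨l, hl⟩ := p.exists_stack_eq_cons j
  simp [hl]

lemma tour_succ_mem_stack_of_D {j : ℕ} (h : p.toList[j]? = some D) :
    p.tour (j + 1) ∈ p.stack j := by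
  obtain ⟨l, hl⟩ := p.exists_stack_eq_of_D h
  simp [hl]

lemma tour_succ_of_U {j : ℕ} (h : p.toList[j]? = some U) :
    p.tour (j + 1) = (p.toList.take j).count U + 2 := by
  simp [tour, stack_succ_of_U h]

lemma tour_mem_Icc (j : ℕ) : p.tour j ∈ Icc 1 ((p.toList.take j).count U + 1) :=
  mem_Icc.2 (le_of_mem_stack (p.tour_mem_stack j))

lemma tour_length : p.tour p.toList.length = 1 := by
  have hlen := p.length_stack p.toList.length
  rw [List.take_length, p.count_U_eq_count_D] at hlen
  obtain ⟨a, ha⟩ := List.length_eq_one_iff.1 (by omega : (p.stack p.toList.length).length = 1)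
  have := p.getLast?_stack p.toList.length
  rw [ha, List.getLast?_singleton, Option.some_inj] at this
  simp [tour, ha, this]

lemma image_range_tour (j : ℕ) :
    (range (j + 1)).image p.tour = Icc 1 ((p.toList.take j).count U + 1) := by
  induction j with
  | zero => simp [tour, stack]
  | succ j ih =>
    rw [range_add_one, image_insert, ih, count_take_add_one]
    rcases h : p.toList[j]? with _ | ⟨_ | _⟩
    · rw [tour, stack_succ_of_none h, ← tour]
      exact insert_eq_of_mem (p.tour_mem_Icc j)
    · rw [tour_succ_of_U h]
      exact insert_Icc_right_eq_Icc_add_one (by omega)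
    · exact insert_eq_of_mem (mem_Icc.2 (le_of_mem_stack (tour_succ_mem_stack_of_D h)))

lemma exists_lt_tour_eq_pred {j : ℕ} (h1 : 1 < p.tour j) : ∃ i < j, p.tour i = p.tour j - 1 := by
  have hj := mem_Icc.1 (p.tour_mem_Icc j)
  have hpred : p.tour j - 1 ∈ (range (j + 1)).image p.tour := by
    rw [image_range_tour, mem_Icc]
    omega
  obtain ⟨i, hi, hti⟩ := mem_image.1 hpred
  refine ⟨i, lt_of_le_of_ne (Nat.lt_succ_iff.1 (mem_range.1 hi)) ?_, hti⟩
  rintro rfl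
  omega

lemma isNewStep_tour_iff {j : ℕ} (hj : j < p.toList.length) :
    IsNewStep p.tour j ↔ p.toList[j] = U := by
  rw [isNewStep_iff_notMem_image, image_range_tour]
  have h : p.toList[j]? = some p.toList[j] := List.getElem?_eq_getElem hj
  rcases hU : p.toList[j] with _ | _ <;> rw [hU] at h
  · simp [tour_succ_of_U h]
  · simpa using le_of_mem_stack (tour_succ_mem_stack_of_D h)

lemma isChain_parent_stack (j : ℕ) : (p.stack j).IsChain fun a b => parent p.tour a = b := by
  induction j with
  | zero => simp [stack]
  | succ j ih =>
    rcases h : p.toList[j]? with _ | ⟨_ | _⟩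
    · rwa [stack_succ_of_none h]
    · obtain ⟨l, hl⟩ := p.exists_stack_eq_cons j
      have hj : j < p.toList.length := (List.getElem?_eq_some_iff.1 h).1
      have hnew : IsNewStep p.tour j := (isNewStep_tour_iff hj).2 (by simpa [hj] using h)
      rw [stack_succ_of_U h, ← tour_succ_of_U h, hl, List.isChain_cons_cons, hnew.parent_eq,
        ← hl]
      exact ⟨rfl, ih⟩
    · rw [stack_succ_of_D h]
      exact ih.tail

lemma descend_or_return {j : ℕ} (hj : j < p.toList.length) :
    p.tour j < p.tour (j + 1) ∧ parent p.tour (p.tour (j + 1)) = p.tour j ∨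
      p.tour (j + 1) < p.tour j ∧ parent p.tour (p.tour j) = p.tour (j + 1) := by
  have h : p.toList[j]? = some p.toList[j] := List.getElem?_eq_getElem hj
  rcases hU : p.toList[j] with _ | _ <;> rw [hU] at h
  · refine Or.inl ⟨?_, ((isNewStep_tour_iff hj).2 hU).parent_eq⟩
    have := mem_Icc.1 (p.tour_mem_Icc j)
    rw [tour_succ_of_U h]
    omega
  · obtain ⟨l, hl⟩ := p.exists_stack_eq_of_D h
    have hchain := p.isChain_parent_stack j
    have hpair := p.pairwise_stack j
    rw [hl, List.isChain_cons_cons] at hchain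
    rw [hl, List.pairwise_cons] at hpair
    exact Or.inr ⟨hpair.1 _ List.mem_cons_self, hchain.1⟩

variable {m : ℕ}

lemma length_eq (hp : p.semilength = m) : p.toList.length = 2 * m := by
  rw [← p.two_mul_semilength_eq_length, hp]

lemma tour_mem_Icc_of_semilength_eq (hp : p.semilength = m) (j : ℕ) :
    p.tour j ∈ Icc 1 (m + 1) := by
  have := mem_Icc.1 (p.tour_mem_Icc j)
  have := (List.take_sublist j p.toList).count_le U
  rw [← semilength, hp] at this
  rw [mem_Icc]
  omega

lemma image_range_two_mul_tour (hp : p.semilength = m) (hm : 0 < m) :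
    (range (2 * m)).image p.tour = Icc 1 (m + 1) := by
  have hfull : (range (2 * m + 1)).image p.tour = Icc 1 (m + 1) := by
    rw [image_range_tour, ← hp, p.two_mul_semilength_eq_length, List.take_length]
    rfl
  have hlast : p.tour (2 * m) = 1 := length_eq hp ▸ p.tour_length
  rw [← hfull, range_add_one, image_insert, hlast]
  exact (insert_eq_of_mem (mem_image.2 ⟨0, mem_range.2 (by omega), rfl⟩)).symm

lemma stepEdges_tour_subset_treeEdges (hp : p.semilength = m) :
    stepEdges p.tour (2 * m) ⊆ treeEdges p.tour m := by
  intro e he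
  obtain ⟨j, hj, rfl⟩ := mem_image.1 he
  rw [mem_range] at hj
  have hj0 := mem_Icc.1 (tour_mem_Icc_of_semilength_eq hp j)
  have hj1 := mem_Icc.1 (tour_mem_Icc_of_semilength_eq hp (j + 1))
  rcases p.descend_or_return (length_eq hp ▸ hj) with ⟨hlt, hpar⟩ | ⟨hlt, hpar⟩
  · exact mem_image.2 ⟨p.tour (j + 1), mem_Icc.2 ⟨by omega, hj1.2⟩, by rw [hpar, Sym2.eq_swap]⟩
  · exact mem_image.2 ⟨p.tour j, mem_Icc.2 ⟨by omega, hj0.2⟩, by rw [hpar]⟩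

theorem isTreeTour (hp : p.semilength = m) (hm : 0 < m) : IsTreeTour m p.tour := by
  have himage := image_range_two_mul_tour hp hm
  have hvis : ∀ v ∈ Icc 2 (m + 1), ∃ i < 2 * m, p.tour i = v := fun v hv => by
    simpa [← himage] using Icc_subset_Icc_left one_le_two hv
  refine ⟨rfl, length_eq hp ▸ p.tour_length, fun j _ => (mem_Icc.1 (p.tour_mem_Icc j)).1,
    fun j hj => ?_, fun j _ => p.exists_lt_tour_eq_pred, by simp [himage], ?_⟩
  · rcases p.descend_or_return (length_eq hp ▸ hj) with h | h <;> omega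
  · rw [Subset.antisymm (stepEdges_tour_subset_treeEdges hp)
      (treeEdges_subset_stepEdges rfl hvis),
      card_treeEdges rfl fun v hv => (hvis v hv).imp fun _ => And.right]

theorem eq_of_tour_eq {q : DyckWord} (hp : p.semilength = m) (hq : q.semilength = m)
    (hpq : ∀ j < 2 * m, p.tour j = q.tour j) : p = q := by
  have hpq' : ∀ j ≤ 2 * m, p.tour j = q.tour j := fun j hj => by
    rcases hj.lt_or_eq with hj | rfl
    · exact hpq j hj
    · rw [← length_eq hp, tour_length, length_eq hp, ← length_eq hq, tour_length]
  refine DyckWord.ext (List.ext_getElem ((length_eq hp).trans (length_eq hq).symm)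
    fun j hjp hjq => ?_)
  have hnew := isNewStep_congr (x := p.tour) (y := q.tour) (j := j) fun i hi => hpq' i (by
    have := length_eq hp
    omega)
  rw [isNewStep_tour_iff hjp, isNewStep_tour_iff hjq] at hnew
  rcases hU : p.toList[j] with _ | _
  · exact (hnew.1 hU).symm
  · rcases q.toList[j].dichotomy with hq | hq
    · exact absurd (hnew.2 hq) (by rw [hU]; decide)
    · exact hq.symm

end DyckWord

lemma IsTreeTour.tour_dyckWord {m : ℕ} {x : ℕ → ℕ} (h : IsTreeTour m x) :
    ∀ j ≤ 2 * m, h.dyckWord.tour j = x j := by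
  have hm := Nat.pos_of_ne_zero h.ne_zero
  refine (h.dyckWord.isTreeTour h.semilength_dyckWord hm).eqOn_of_isNewStep_iff h fun j hj => ?_
  have hlen : j < h.dyckWord.toList.length := by
    rw [DyckWord.length_eq h.semilength_dyckWord]
    exact hj
  rw [DyckWord.isNewStep_tour_iff hlen, h.getElem_dyckWord hlen]
  split_ifs with hnew <;> simp [hnew]

lemma normalized_iff_isTreeTour {m : ℕ} (t : Fin (2 * m) → ℕ) {x : ℕ → ℕ}
    (hx : ∀ j : Fin (2 * m), x j = t j) (hper : x (2 * m) = x 0) :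
    (Normalized t ∧ (edgeSet t).card = m ∧ (vertexSet t).card = m + 1) ↔ IsTreeTour m x := by
  have hsucc : ∀ j : Fin (2 * m), t (cyclicSucc j) = x (j + 1) := by
    intro j
    rw [← hx]
    change x ((j + 1) % (2 * m)) = x (j + 1)
    rcases (Nat.succ_le_of_lt j.2).lt_or_eq with hj | hj
    · rw [Nat.mod_eq_of_lt hj]
    · rw [show (j : ℕ) + 1 = 2 * m from hj, Nat.mod_self, hper]
  have hV : vertexSet t = (range (2 * m)).image x := by
    ext v
    simp [vertexSet, Fin.exists_iff, ← hx]
  have hE : edgeSet t = stepEdges x (2 * m) := by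
    ext e
    simp only [edgeSet, stepEdges, hsucc]
    simp [Fin.exists_iff, ← hx]
  have hpred : ∀ i (hi : i < 2 * m),
      (∃ j < (⟨i, hi⟩ : Fin (2 * m)), x j = x i - 1) ↔ ∃ j < i, x j = x i - 1 :=
    fun i hi => ⟨fun ⟨j, hj, hxj⟩ => ⟨j, hj, hxj⟩, fun ⟨j, hj, hxj⟩ => ⟨⟨j, by omega⟩, hj, hxj⟩⟩
  simp only [Normalized, Admissible, hV, hE, hsucc]
  simp only [Fin.forall_iff, ← hx, hpred]
  refine ⟨fun ⟨⟨⟨hpos, hadj⟩, hpred⟩, hE, hV⟩ => ?_,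
    fun h => ⟨⟨⟨h.pos, h.adj⟩, h.pred_visited⟩, h.card_stepEdges, h.card_vertices⟩⟩
  have hm : 0 < 2 * m := by
    by_contra! hm
    simp_all
  -- The first entry has no predecessor, so it is the label `1`.
  have h0 : x 0 = 1 := by
    have := hpos 0 hm
    by_contra h1
    obtain ⟨j, hj, -⟩ := hpred 0 hm (by omega)
    omega
  exact ⟨h0, hper.trans h0, hpos, hadj, hpred, hV, hE⟩

/-- The number of normalized `2m`-tuples `ω` with `|E(ω)| = m` and
`|V(ω)| = m + 1` is the Catalan number `Catalan(m) = (1/(m+1))·binom(2m, m)`. -/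
theorem ncard_normalized_tuples_eq_catalan (m : ℕ) (hm : 0 < m) :
    Set.ncard {t : Fin (2 * m) → ℕ |
        Normalized t ∧ (edgeSet t).card = m ∧ (vertexSet t).card = m + 1} = catalan m ∧
      catalan m = (2 * m).choose m / (m + 1) := by
  have : NeZero (2 * m) := ⟨by omega⟩
  refine ⟨?_, by rw [catalan_eq_centralBinom_div, Nat.centralBinom]⟩
  have htour_inj : Function.Injective fun p : {p : DyckWord // p.semilength = m} =>
      fun j : Fin (2 * m) => p.1.tour j := fun ⟨p, hp⟩ ⟨q, hq⟩ hpq =>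
    Subtype.ext (p.eq_of_tour_eq hp hq fun j hj => congrFun hpq ⟨j, hj⟩)
  rw [← DyckWord.card_dyckWord_semilength_eq_catalan, ← Nat.card_eq_fintype_card,
    ← Set.ncard_range_of_injective htour_inj]
  congr 1
  ext t
  refine ⟨fun ht => ?_, ?_⟩
  · have h := (normalized_iff_isTreeTour t (x := fun i => t (Fin.ofNat (2 * m) i))
      (fun j => by simp) (by simp)).1 ht
    exact ⟨⟨h.dyckWord, h.semilength_dyckWord⟩,
      funext fun j => by simpa using h.tour_dyckWord j j.2.le⟩
  · rintro ⟨⟨p, hp⟩, rfl⟩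
    have h := p.isTreeTour hp hm
    exact (normalized_iff_isTreeTour _ (fun _ => rfl) (h.finish.trans h.start.symm)).2 h

end
end

section
/- Fix λ > 0 and positive integers k and n with n ≥ k. Then E[Tr(M_{n,λ/n}^k)] = ∑_{ω ∈ N_k} (λ/n)^{|E(ω)|} · n!/(n − |V(ω)|)!, where N_k is the (finite) set of normalized k-tuples, and n!/(n−j)! counts the injective maps from {1,…,j} to {1,…,n}. -/
/-!
Expanding the trace, `E[Tr(M^k)]` is the sum over closed walks `i : Fin k → Fin n` of
`E[∏ⱼ M(iⱼ, iⱼ₊₁)]`. A walk that stays put at some step contributes `0`; otherwise, grouping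
equal edges, the product is a product of powers of distinct, independent Bernoulli(`p`)
entries, whose expectation is `p ^ #E(i)` because every positive moment of a Bernoulli variable
is `p`. Finally, relabelling the vertices of a walk in order of first appearance sends it to
the unique normalized tuple with the same pattern of coincidences, the walks over a given
normalized `ω` are its injective relabellings (`n!/(n - |V(ω)|)!` of them), and they all have
`|E(ω)|` edges.
-/

open MeasureTheory ProbabilityTheory Filter Matrix
open scoped ENNReal

noncomputable section

/-- The Bernoulli(`p`) distribution on `ℝ`: mass `p` at `1` and `1 - p` at `0`. -/
def bernoulliReal (p : ℝ) : Measure ℝ :=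
  ENNReal.ofReal p • Measure.dirac 1 + ENNReal.ofReal (1 - p) • Measure.dirac 0

/-- `M` is (as a random variable on `(Ω, P)`) the Erdős–Rényi adjacency matrix `M_{n,p}`:
a real symmetric `n × n` matrix with zero diagonal whose above-diagonal entries are
independent Bernoulli(`p`) random variables. -/
structure IsERMatrix {Ω : Type*} [MeasurableSpace Ω] (P : Measure Ω) (n : ℕ) (p : ℝ)
    (M : Ω → Matrix (Fin n) (Fin n) ℝ) : Prop where
  meas : ∀ i j, Measurable fun ω => M ω i j
  symm : ∀ ω i j, M ω i j = M ω j i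
  diag : ∀ ω i, M ω i i = 0
  indep : iIndepFun (m := fun _ => (inferInstance : MeasurableSpace ℝ))
    (fun q : {q : Fin n × Fin n // q.1 < q.2} => fun ω => M ω q.1.1 q.1.2) P
  law : ∀ i j : Fin n, i < j → P.map (fun ω => M ω i j) = bernoulliReal p

/-- Empirical spectral distribution of an `n × n` real symmetric matrix:
`(1/n) ∑ δ_{Λ i}` over the eigenvalues (with multiplicity). -/
def specMeasure {n : ℕ} (H : Matrix (Fin n) (Fin n) ℝ) : Measure ℝ :=
  if h : H.IsHermitian then (n : ℝ≥0∞)⁻¹ • ∑ i : Fin n, Measure.dirac (h.eigenvalues i) else 0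

/-- The standard semicircle distribution, with density `(2π)⁻¹ √(4 - x²) 1_{|x| ≤ 2}`. -/
def semicircle : Measure ℝ :=
  volume.withDensity (Set.indicator (Set.Icc (-2 : ℝ) 2)
    fun x => ENNReal.ofReal ((2 * Real.pi)⁻¹ * Real.sqrt (4 - x ^ 2)))

/-- Weak convergence of measures on `ℝ` along a filter: integrals of every
bounded continuous function converge. -/
def WeakTendsto {ι : Type*} (L : Filter ι) (μ : ι → Measure ℝ) (ν : Measure ℝ) : Prop :=
  ∀ f : ℝ → ℝ, Continuous f → (∃ C, ∀ x, |f x| ≤ C) →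
    Tendsto (fun i => ∫ x, f x ∂(μ i)) L (nhds (∫ x, f x ∂ν))

open Finset

theorem Finset.card_image_univ_eq_of_eq_iff {ι α β : Type*} [Fintype ι] [DecidableEq α]
    [DecidableEq β] {f : ι → α} {g : ι → β} (h : ∀ a b, f a = f b ↔ g a = g b) :
    #(univ.image f) = #(univ.image g) := by
  have hker : Setoid.ker f = Setoid.ker g := Setoid.ext h
  simp only [← Set.toFinset_range, Set.toFinset_card, ← Nat.card_eq_fintype_card]
  rw [← Nat.card_congr (Setoid.quotientKerEquivRange f),
    ← Nat.card_congr (Setoid.quotientKerEquivRange g), hker]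

theorem card_image_sym2_eq_of_eq_iff {ι κ α γ : Type*} [Fintype κ] [DecidableEq α]
    [DecidableEq γ] {i : ι → α} {t : ι → γ} (h : ∀ a b, i a = i b ↔ t a = t b) (u v : κ → ι) :
    #(univ.image fun j => s(i (u j), i (v j))) = #(univ.image fun j => s(t (u j), t (v j))) :=
  card_image_univ_eq_of_eq_iff fun a b => by simp only [Sym2.eq_iff, h]

section SamePattern

variable {ι α β : Type*}

noncomputable def kerEqEquivRangeEmbedding (t : ι → α) :
    {i : ι → β // ∀ a b, i a = i b ↔ t a = t b} ≃ (Set.range t ↪ β) where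
  toFun i := ⟨fun v => i.1 (Set.rangeSplitting t v), fun v w hvw => by
    rw [Subtype.ext_iff, ← Set.apply_rangeSplitting t v, ← Set.apply_rangeSplitting t w]
    exact (i.2 _ _).1 hvw⟩
  invFun f := ⟨fun a => f (Set.rangeFactorization t a), fun a b => by
    rw [f.injective.eq_iff, Subtype.ext_iff]
    rfl⟩
  left_inv i := by
    ext a
    exact (i.2 _ _).2 (Set.apply_rangeSplitting t _)
  right_inv f := by
    ext v
    simp [Set.rangeFactorization, Set.apply_rangeSplitting]

theorem card_filter_eq_iff_eq_descFactorial [Fintype ι] [DecidableEq ι] [DecidableEq α]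
    [Fintype β] [DecidableEq β] (t : ι → α) :
    #{i : ι → β | ∀ a b, i a = i b ↔ t a = t b} =
      (Fintype.card β).descFactorial #(univ.image t) := by
  rw [← Fintype.card_subtype, Fintype.card_congr (kerEqEquivRangeEmbedding t),
    Fintype.card_embedding_eq, ← Set.toFinset_card, Set.toFinset_range]

end SamePattern

section Normalize

variable {k : ℕ} {β : Type*} [DecidableEq β] {i : Fin k → β} {a b j : Fin k}

def firstIndex (i : Fin k → β) (j : Fin k) : Fin k :=
  ({x | i x = i j} : Finset (Fin k)).min' ⟨j, by simp⟩

theorem apply_firstIndex (i : Fin k → β) (j : Fin k) : i (firstIndex i j) = i j :=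
  (mem_filter.1 (min'_mem ({x | i x = i j} : Finset (Fin k)) _)).2

theorem firstIndex_le_of_apply_eq {x : Fin k} (h : i x = i j) : firstIndex i j ≤ x :=
  min'_le _ _ (by simpa using h)

theorem firstIndex_le (i : Fin k → β) (j : Fin k) : firstIndex i j ≤ j :=
  firstIndex_le_of_apply_eq rfl

theorem firstIndex_congr (h : i a = i b) : firstIndex i a = firstIndex i b := by
  simp only [firstIndex, h]

theorem firstIndex_firstIndex (i : Fin k → β) (j : Fin k) :
    firstIndex i (firstIndex i j) = firstIndex i j :=
  firstIndex_congr (apply_firstIndex i j)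

theorem firstIndex_eq_of_eq_iff {γ : Type*} [DecidableEq γ] {i' : Fin k → γ}
    (h : ∀ a b, i a = i b ↔ i' a = i' b) : firstIndex i = firstIndex i' := by
  ext1 j
  simp only [firstIndex, h]

/-- Relabels the values of `i` by `1, 2, …` in order of first appearance. -/
def normalization (i : Fin k → β) (j : Fin k) : ℕ :=
  #{x | firstIndex i x = x ∧ x < firstIndex i j} + 1

theorem normalization_lt_normalization (h : firstIndex i a < firstIndex i b) :
    normalization i a < normalization i b := by
  unfold normalization
  gcongr
  refine (ssubset_iff_of_subset fun x => ?_).2 ⟨firstIndex i a, ?_⟩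
  · simp only [mem_filter, mem_univ, true_and]
    exact fun hx => ⟨hx.1, hx.2.trans h⟩
  · simp [firstIndex_firstIndex, h]

theorem normalization_eq_normalization_iff :
    normalization i a = normalization i b ↔ i a = i b := by
  refine ⟨fun h => ?_, fun h => by simp only [normalization, firstIndex_congr h]⟩
  by_contra hne
  have hfi : firstIndex i a ≠ firstIndex i b := fun he => hne <| by
    rw [← apply_firstIndex i a, he, apply_firstIndex i b]
  rcases hfi.lt_or_gt with hlt | hlt
  · exact (normalization_lt_normalization hlt).ne h
  · exact (normalization_lt_normalization hlt).ne' h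

theorem normalization_eq_of_eq_iff {γ : Type*} [DecidableEq γ] {i' : Fin k → γ}
    (h : ∀ a b, i a = i b ↔ i' a = i' b) : normalization i = normalization i' := by
  ext1 j
  simp only [normalization, firstIndex_eq_of_eq_iff h]

theorem exists_lt_normalization_eq_sub_one (h : 1 < normalization i j) :
    ∃ j' < j, normalization i j' = normalization i j - 1 := by
  unfold normalization at h ⊢
  set S : Finset (Fin k) := {x | firstIndex i x = x ∧ x < firstIndex i j}
  have hS : S.Nonempty := card_pos.1 (by omega)
  have hmax : S.max' hS ∈ S := max'_mem S hS
  simp only [S, mem_filter, mem_univ, true_and] at hmax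
  refine ⟨S.max' hS, hmax.2.trans_le (firstIndex_le i j), ?_⟩
  have hbelow : ({x | firstIndex i x = x ∧ x < firstIndex i (S.max' hS)} : Finset (Fin k))
      = S.erase (S.max' hS) := by
    ext x
    simp only [hmax.1, mem_filter, mem_univ, true_and, mem_erase, S]
    constructor
    · exact fun hx => ⟨hx.2.ne, hx.1, hx.2.trans hmax.2⟩
    · exact fun hx => ⟨hx.2.1, lt_of_le_of_ne (le_max' S x (by simp [S, hx.2])) hx.1⟩
  rw [hbelow, card_erase_of_mem (max'_mem S hS)]
  omega

theorem normalized_normalization (hi : ∀ j, i j ≠ i (cyclicSucc j)) :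
    Normalized (normalization i) :=
  ⟨⟨fun _ => Nat.succ_pos _, fun j h => hi j (normalization_eq_normalization_iff.1 h)⟩,
    fun _ => exists_lt_normalization_eq_sub_one⟩

end Normalize

namespace Normalized

variable {k : ℕ} {t : Fin k → ℕ} {a b j : Fin k}

theorem exists_apply_eq (ht : Normalized t) {m : ℕ} (h1 : 1 ≤ m) (h2 : m ≤ t j) :
    ∃ j', t j' = m := by
  induction h2 using Nat.decreasingInduction with
  | self => exact ⟨j, rfl⟩
  | of_succ m _ ih =>
    obtain ⟨j', hj'⟩ := ih (by omega)
    obtain ⟨j'', -, hj''⟩ := ht.2 j' (by omega)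
    exact ⟨j'', by omega⟩

theorem apply_le (ht : Normalized t) (j : Fin k) : t j ≤ k := by
  have hsub : Icc 1 (t j) ⊆ univ.image t := fun m hm => by
    obtain ⟨j', hj'⟩ := ht.exists_apply_eq (mem_Icc.1 hm).1 (mem_Icc.1 hm).2
    exact mem_image.2 ⟨j', mem_univ _, hj'⟩
  simpa using (card_le_card hsub).trans (card_image_le.trans_eq (card_fin k))

theorem firstIndex_lt_firstIndex (ht : Normalized t) (h : t a < t b) :
    firstIndex t a < firstIndex t b := by
  have step : ∀ b, 1 < t b → ∃ j' < firstIndex t b, t j' = t b - 1 := fun b hb => by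
    simpa only [apply_firstIndex t b] using ht.2 (firstIndex t b) (by rwa [apply_firstIndex t b])
  obtain ⟨d, hd⟩ : ∃ d, t b = t a + 1 + d := ⟨t b - t a - 1, by omega⟩
  clear h
  have hpos := ht.1.1 a
  induction d generalizing b with
  | zero =>
    obtain ⟨j', hj', htj'⟩ := step b (by omega)
    have htj'a : t j' = t a := by omega
    exact (firstIndex_le_of_apply_eq htj'a).trans_lt hj'
  | succ d ih =>
    obtain ⟨j', hj', htj'⟩ := step b (by omega)
    exact (ih (b := j') (by omega)).trans_le ((firstIndex_le t j').trans hj'.le)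

theorem firstIndex_le_firstIndex (ht : Normalized t) (h : t a ≤ t b) :
    firstIndex t a ≤ firstIndex t b := by
  rcases h.eq_or_lt with h | h
  · exact (firstIndex_congr h).le
  · exact (ht.firstIndex_lt_firstIndex h).le

theorem normalization_eq (ht : Normalized t) : normalization t = t := by
  ext1 j
  suffices #{x | firstIndex t x = x ∧ x < firstIndex t j} = #(Ico 1 (t j)) by
    rw [normalization, this, Nat.card_Ico]
    have := ht.1.1 j
    omega
  refine card_nbij t (fun x hx => ?_) (fun x hx y hy hxy => ?_) (fun m hm => ?_)
  · simp only [mem_coe, mem_filter, mem_univ, true_and] at hx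
    refine mem_Ico.2 ⟨ht.1.1 x, lt_of_not_ge fun hle => ?_⟩
    exact (ht.firstIndex_le_firstIndex hle).not_gt (hx.1.trans_lt hx.2)
  · simp only [mem_coe, mem_filter, mem_univ, true_and] at hx hy
    rw [← hx.1, ← hy.1]
    exact firstIndex_congr hxy
  · obtain ⟨hm1, hm2⟩ := mem_Ico.1 hm
    obtain ⟨j', rfl⟩ := ht.exists_apply_eq hm1 hm2.le
    refine ⟨firstIndex t j', ?_, apply_firstIndex t j'⟩
    simp only [mem_coe, mem_filter, mem_univ, true_and]
    exact ⟨firstIndex_firstIndex t j', ht.firstIndex_lt_firstIndex hm2⟩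

end Normalized

theorem normalization_eq_iff_eq_iff {k : ℕ} {β : Type*} [DecidableEq β] {i : Fin k → β}
    {t : Fin k → ℕ} (ht : Normalized t) :
    normalization i = t ↔ ∀ a b, i a = i b ↔ t a = t b := by
  refine ⟨fun h a b => ?_, fun h => ?_⟩
  · rw [← h, normalization_eq_normalization_iff]
  · rw [normalization_eq_of_eq_iff h, ht.normalization_eq]

instance (k : ℕ) : Finite {t : Fin k → ℕ // Normalized t} :=
  Finite.of_injective (fun t j => (⟨t.1 j, Nat.lt_succ_of_le (t.2.apply_le j)⟩ : Fin (k + 1)))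
    fun _ _ h => Subtype.ext <| funext fun j => congrArg Fin.val (congrFun h j)

theorem sum_closedWalks_eq_tsum_normalized (k : ℕ) (β : Type*) [Fintype β] [DecidableEq β]
    (p : ℝ) :
    ∑ i : Fin k → β, (if ∀ j, i j ≠ i (cyclicSucc j)
        then p ^ #(univ.image fun j => s(i j, i (cyclicSucc j))) else 0) =
      ∑' t : {t : Fin k → ℕ // Normalized t},
        p ^ #(edgeSet t.1) * ((Fintype.card β).descFactorial #(vertexSet t.1) : ℝ) := by
  have := Fintype.ofFinite {t : Fin k → ℕ // Normalized t}
  have hmaps : ∀ i ∈ ({i | ∀ j, i j ≠ i (cyclicSucc j)} : Finset (Fin k → β)),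
      normalization i ∈ univ.map (Function.Embedding.subtype Normalized) := fun i hi =>
    mem_map.2 ⟨⟨_, normalized_normalization (mem_filter.1 hi).2⟩, mem_univ _, rfl⟩
  rw [tsum_fintype, ← sum_filter, ← sum_fiberwise_of_maps_to hmaps, sum_map]
  refine sum_congr rfl fun t _ => ?_
  have hfiber : ({i ∈ {i | ∀ j, i j ≠ i (cyclicSucc j)} | normalization i = t.1} :
      Finset (Fin k → β)) = ({i | ∀ a b, i a = i b ↔ t.1 a = t.1 b} : Finset (Fin k → β)) := by
    ext i
    simp only [filter_filter, mem_filter, mem_univ, true_and, normalization_eq_iff_eq_iff t.2]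
    refine ⟨And.right, fun h => ⟨fun j hj => t.2.1.2 j ((h _ _).1 hj), h⟩⟩
  have hedges : ∀ i ∈ ({i | ∀ a b, i a = i b ↔ t.1 a = t.1 b} : Finset (Fin k → β)),
      #(univ.image fun j => s(i j, i (cyclicSucc j))) = #(edgeSet t.1) := fun i hi =>
    card_image_sym2_eq_of_eq_iff (mem_filter.1 hi).2 (fun j => j) cyclicSucc
  rw [Function.Embedding.subtype_apply, hfiber, sum_congr rfl fun i hi => by rw [hedges i hi],
    sum_const, nsmul_eq_mul, mul_comm, vertexSet, ← card_filter_eq_iff_eq_descFactorial]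
  -- the two filters differ only in their `Decidable` instances
  congr 3
  ext i
  simp only [mem_filter]

namespace Matrix

variable {ι R : Type*} [Fintype ι] [DecidableEq ι] [CommSemiring R]

theorem pow_succ_apply_eq_sum_prod (A : Matrix ι ι R) (m : ℕ) (x y : ι) :
    (A ^ (m + 1)) x y = ∑ g : Fin m → ι,
      ∏ j, A ((Fin.cons x g : Fin (m + 1) → ι) j) ((Fin.snoc g y : Fin (m + 1) → ι) j) := by
  induction m generalizing x with
  | zero => simp [Fin.snoc]
  | succ m ih =>
    rw [pow_succ', mul_apply, ← (Fin.consEquiv fun _ => ι).sum_comp, Fintype.sum_prod_type]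
    refine sum_congr rfl fun z _ => ?_
    rw [ih, mul_sum]
    refine sum_congr rfl fun g _ => ?_
    rw [Fin.prod_univ_succ (n := m + 1)]
    simp only [Fin.consEquiv, Equiv.coe_fn_mk, ← Fin.cons_snoc_eq_snoc_cons, Fin.cons_zero,
      Fin.cons_succ]

theorem trace_pow_succ_eq_sum_prod_finRotate (A : Matrix ι ι R) (m : ℕ) :
    trace (A ^ (m + 1)) = ∑ i : Fin (m + 1) → ι, ∏ j, A (i j) (i (finRotate _ j)) := by
  rw [← (Fin.consEquiv fun _ => ι).sum_comp, Fintype.sum_prod_type, trace]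
  simp only [diag_apply, pow_succ_apply_eq_sum_prod, Fin.snoc_eq_cons_rotate, Fin.consEquiv,
    Equiv.coe_fn_mk]

end Matrix

theorem cyclicSucc_eq_finRotate (k : ℕ) : (cyclicSucc : Fin k → Fin k) = finRotate k := by
  ext j
  cases k with
  | zero => exact j.elim0
  | succ k => simp [cyclicSucc, finRotate_apply, Fin.val_add]

theorem ProbabilityTheory.iIndepFun.integral_prod_comp_eq_pow_card_image {Ω ι κ : Type*}
    {mΩ : MeasurableSpace Ω} {P : Measure Ω} [Fintype ι] [DecidableEq ι] [Fintype κ]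
    {X : ι → Ω → ℝ} (hX : iIndepFun X P) (hmeas : ∀ q, Measurable (X q)) {p : ℝ}
    (hmom : ∀ q {m : ℕ}, m ≠ 0 → ∫ ω, X q ω ^ m ∂P = p) (e : κ → ι) :
    ∫ ω, ∏ j, X (e j) ω ∂P = p ^ #(univ.image e) := by
  have := hX.isProbabilityMeasure
  set c : ι → ℕ := fun q => #{j | e j = q}
  have hfiber : ∀ ω, ∏ j, X (e j) ω = ∏ q, X q ω ^ c q := fun ω => by
    rw [← prod_fiberwise univ e]
    exact prod_congr rfl fun q _ => prod_eq_pow_card fun j hj => by rw [(mem_filter.1 hj).2]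
  have hmoment : ∀ q, ∫ ω, X q ω ^ c q ∂P = if q ∈ univ.image e then p else 1 := fun q => by
    by_cases hq : q ∈ univ.image e
    · obtain ⟨j, -, rfl⟩ := mem_image.1 hq
      exact (if_pos hq).symm ▸ hmom _ (card_ne_zero_of_mem (mem_filter.2 ⟨mem_univ j, rfl⟩))
    · have hc : c q = 0 := card_eq_zero.2 <| filter_eq_empty_iff.2 fun j _ hj =>
        hq (mem_image.2 ⟨j, mem_univ _, hj⟩)
      simp [hc, hq]
  simp_rw [hfiber]
  rw [hX.integral_fun_prod_comp (fun q => (hmeas q).aemeasurable)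
    (fun q => (continuous_pow (c q)).aestronglyMeasurable)]
  simp only [hmoment, prod_ite_mem, univ_inter, prod_const]

theorem integral_pow_bernoulliReal {p : ℝ} (hp : 0 ≤ p) {m : ℕ} (hm : m ≠ 0) :
    ∫ x, x ^ m ∂bernoulliReal p = p := by
  have hint : ∀ a : ℝ, Integrable (fun x : ℝ => x ^ m) (Measure.dirac a) := fun a =>
    integrable_dirac (by simp)
  rw [bernoulliReal, integral_add_measure ((hint 1).smul_measure ENNReal.ofReal_ne_top)
    ((hint 0).smul_measure ENNReal.ofReal_ne_top)]
  simp [ENNReal.toReal_ofReal hp, hm]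

theorem ae_bernoulliReal (p : ℝ) : ∀ᵐ x ∂bernoulliReal p, x = 0 ∨ x = 1 := by
  have hmeas : MeasurableSet {x : ℝ | x = 0 ∨ x = 1} :=
    (measurableSet_singleton 0).union (measurableSet_singleton 1)
  simp only [bernoulliReal, ae_add_measure_iff]
  exact ⟨Measure.ae_smul_measure ((ae_dirac_iff hmeas).2 (Or.inr rfl)) _,
    Measure.ae_smul_measure ((ae_dirac_iff hmeas).2 (Or.inl rfl)) _⟩

namespace IsERMatrix

variable {Ω : Type*} [MeasurableSpace Ω] {P : Measure Ω} {n : ℕ} {p : ℝ}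
  {M : Ω → Matrix (Fin n) (Fin n) ℝ}

theorem apply_eq_apply_inf_sup (hM : IsERMatrix P n p M) (ω : Ω) (a b : Fin n) :
    M ω a b = M ω (a ⊓ b) (a ⊔ b) := by
  rcases le_total a b with h | h
  · rw [inf_eq_left.2 h, sup_eq_right.2 h]
  · rw [inf_eq_right.2 h, sup_eq_left.2 h, hM.symm]

theorem ae_apply_eq_zero_or_one (hM : IsERMatrix P n p M) :
    ∀ᵐ ω ∂P, ∀ a b, M ω a b = 0 ∨ M ω a b = 1 := by
  refine ae_all_iff.2 fun a => ae_all_iff.2 fun b => ?_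
  simp only [hM.apply_eq_apply_inf_sup _ a b]
  rcases eq_or_ne a b with rfl | hab
  · exact ae_of_all _ fun ω => Or.inl (by simpa using hM.diag ω a)
  · refine ae_of_ae_map (hM.meas _ _).aemeasurable (p := fun x => x = 0 ∨ x = 1) ?_
    rw [hM.law _ _ (inf_lt_sup.2 hab)]
    exact ae_bernoulliReal p

theorem integral_apply_pow (hM : IsERMatrix P n p M) (hp : 0 ≤ p) {a b : Fin n} (hab : a < b)
    {m : ℕ} (hm : m ≠ 0) : ∫ ω, M ω a b ^ m ∂P = p := by
  rw [← integral_map (hM.meas a b).aemeasurable (continuous_pow m).aestronglyMeasurable,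
    hM.law a b hab, integral_pow_bernoulliReal hp hm]

theorem integrable_prod_apply [IsFiniteMeasure P] (hM : IsERMatrix P n p M) {κ : Type*}
    [Fintype κ] (u v : κ → Fin n) : Integrable (fun ω => ∏ j, M ω (u j) (v j)) P := by
  refine .of_bound
    (Finset.measurable_prod _ fun j _ => hM.meas (u j) (v j)).aestronglyMeasurable 1 ?_
  filter_upwards [hM.ae_apply_eq_zero_or_one] with ω hω
  rw [Real.norm_eq_abs, abs_prod]
  refine prod_le_one (fun _ _ => abs_nonneg _) fun j _ => ?_
  rcases hω (u j) (v j) with h | h <;> simp [h]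

theorem integral_prod_closedWalk (hM : IsERMatrix P n p M) (hp : 0 ≤ p) {k : ℕ}
    (i : Fin k → Fin n) :
    ∫ ω, ∏ j, M ω (i j) (i (cyclicSucc j)) ∂P =
      if ∀ j, i j ≠ i (cyclicSucc j) then p ^ #(univ.image fun j => s(i j, i (cyclicSucc j)))
      else 0 := by
  split_ifs with hi
  · let e : Fin k → {q : Fin n × Fin n // q.1 < q.2} := fun j =>
      ⟨(i j ⊓ i (cyclicSucc j), i j ⊔ i (cyclicSucc j)), inf_lt_sup.2 (hi j)⟩
    have he : ∀ a b, e a = e b ↔ s(i a, i (cyclicSucc a)) = s(i b, i (cyclicSucc b)) := by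
      simp [e, Subtype.ext_iff, Prod.ext_iff, ← Sym2.inf_eq_inf_and_sup_eq_sup]
    simp_rw [hM.apply_eq_apply_inf_sup _ (i _) (i (cyclicSucc _))]
    rw [hM.indep.integral_prod_comp_eq_pow_card_image (fun q => hM.meas q.1.1 q.1.2)
      (fun q _ hm => hM.integral_apply_pow hp q.2 hm) e, card_image_univ_eq_of_eq_iff he]
  · obtain ⟨j, hj⟩ := not_forall_not.1 hi
    have hzero : ∀ ω, ∏ j, M ω (i j) (i (cyclicSucc j)) = 0 := fun ω =>
      prod_eq_zero (mem_univ j) (hj ▸ hM.diag ω (i j))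
    simp [hzero]

end IsERMatrix

theorem ER_expected_trace_power_general
    {Ω : Type*} [MeasurableSpace Ω] (P : Measure Ω) [IsProbabilityMeasure P]
    (lam : ℝ) (hlam : 0 < lam) (k n : ℕ) (hk : 0 < k)
    (M : Ω → Matrix (Fin n) (Fin n) ℝ) (hM : IsERMatrix P n (lam / n) M) :
    ∫ ω, Matrix.trace (M ω ^ k) ∂P =
      ∑' t : {t : Fin k → ℕ // Normalized t},
        (lam / n) ^ (edgeSet t.1).card * (n.descFactorial (vertexSet t.1).card : ℝ) := by
  obtain ⟨m, rfl⟩ := Nat.exists_eq_add_one.2 hk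
  have hp : 0 ≤ lam / n := div_nonneg hlam.le n.cast_nonneg
  calc ∫ ω, trace (M ω ^ (m + 1)) ∂P
      = ∫ ω, ∑ i : Fin (m + 1) → Fin n, ∏ j, M ω (i j) (i (cyclicSucc j)) ∂P := by
        simp only [trace_pow_succ_eq_sum_prod_finRotate, cyclicSucc_eq_finRotate]
    _ = ∑ i : Fin (m + 1) → Fin n, ∫ ω, ∏ j, M ω (i j) (i (cyclicSucc j)) ∂P :=
        integral_finsetSum _ fun i _ => hM.integrable_prod_apply _ _
    _ = _ := by
        simp only [hM.integral_prod_closedWalk hp, sum_closedWalks_eq_tsum_normalized,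
          Fintype.card_fin]

/-- For `λ > 0` and `1 ≤ k ≤ n` (with `λ ≤ n`),
`E[Tr(M_{n,λ/n}^k)] = ∑_{ω normalized k-tuple} (λ/n)^{|E(ω)|} · n!/(n - |V(ω)|)!`,
where `n!/(n-j)! = n.descFactorial j` counts the injections of `{1,…,j}` into `{1,…,n}`. -/
theorem ER_expected_trace_power
    {Ω : Type*} [MeasurableSpace Ω] (P : Measure Ω) [IsProbabilityMeasure P]
    (lam : ℝ) (hlam : 0 < lam) (k n : ℕ) (hk : 0 < k) (hkn : k ≤ n) (hln : lam ≤ n)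
    (M : Ω → Matrix (Fin n) (Fin n) ℝ) (hM : IsERMatrix P n (lam / n) M) :
    ∫ ω, Matrix.trace (M ω ^ k) ∂P =
      ∑' t : {t : Fin k → ℕ // Normalized t},
        (lam / n) ^ (edgeSet t.1).card * (n.descFactorial (vertexSet t.1).card : ℝ) :=
  ER_expected_trace_power_general P lam hlam k n hk M hM

end
end

section
/- For every z ∈ ℂ with Im z > 0, there is exactly one s ∈ ℂ with Im s > 0 satisfying s = −1/(z + s) (equivalently s² + z·s + 1 = 0), and this unique s equals the Stieltjes transform S_sc(z) = ∫_ℝ 1/(x − z) dρ_sc(x) of the standard semicircle distribution. -/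
open MeasureTheory ProbabilityTheory Filter Matrix
open scoped ENNReal

noncomputable section

/-- The Stieltjes transform of the standard semicircle distribution. -/
def stieltjesSC (z : ℂ) : ℂ := ∫ x : ℝ, ((x : ℂ) - z)⁻¹ ∂ semicircle


/-!
Each root `s` of `s² + z s + 1` satisfies `z = -(s + s⁻¹)`, and the two roots have product `1`,
so for `Im z > 0` exactly one of them lies in the upper half-plane, and it has `‖s‖ < 1`.
Substituting `x = 2 cos θ` gives `S_sc(z) = (2π)⁻¹ ∫₀^π (4 - u²)/(u - z) dθ` with `u = 2 cos θ`,
and with `w = e^{iθ}` the integrand splits as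
`-u + 2s + (1 - s²)(w⁻¹/(1 + s w⁻¹) + w/(1 + s w))`. As `‖s‖ < 1`, the points `1 + s e^{±iθ}`
stay in the right half-plane, so principal logarithms give a primitive; the logarithmic terms
take equal values at `θ = 0` and at `θ = π`, leaving `∫₀^π = 2π s`.
-/

open Complex

lemma im_inv_neg_of_im_pos {s : ℂ} (hs : 0 < s.im) : s⁻¹.im < 0 := by
  rw [inv_im, neg_div, neg_lt_zero]
  exact div_pos hs (normSq_pos.2 fun h ↦ by simp [h] at hs)

namespace QuadraticRoot

variable {z s t : ℂ}

lemma ne_zero (hs : s ^ 2 + z * s + 1 = 0) : s ≠ 0 := by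
  rintro rfl
  norm_num at hs

lemma inv (hs : s ^ 2 + z * s + 1 = 0) : s⁻¹ ^ 2 + z * s⁻¹ + 1 = 0 := by
  have := ne_zero hs
  field_simp
  linear_combination hs

lemma im_ne_zero (hz : z.im ≠ 0) (hs : s ^ 2 + z * s + 1 = 0) : s.im ≠ 0 := by
  intro him
  have hre : z.im * s.re = 0 := by simpa [sq, him] using congrArg Complex.im hs
  have : s = 0 := Complex.ext ((mul_eq_zero.1 hre).resolve_left hz) him
  exact ne_zero hs this

lemma exists_im_pos (hz : z.im ≠ 0) : ∃ s : ℂ, s ^ 2 + z * s + 1 = 0 ∧ 0 < s.im := by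
  obtain ⟨d, hd⟩ := IsAlgClosed.exists_eq_mul_self (z ^ 2 - 4)
  have hr : ((-z + d) / 2) ^ 2 + z * ((-z + d) / 2) + 1 = 0 := by linear_combination -hd / 4
  rcases (im_ne_zero hz hr).lt_or_gt with hneg | hpos
  · refine ⟨_, inv hr, ?_⟩
    simpa using im_inv_neg_of_im_pos (s := -((-z + d) / 2)) (by simpa using hneg)
  · exact ⟨_, hr, hpos⟩

lemma eq_of_im_pos (hs : s ^ 2 + z * s + 1 = 0) (ht : t ^ 2 + z * t + 1 = 0)
    (hs_im : 0 < s.im) (ht_im : 0 < t.im) : s = t := by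
  by_contra hne
  have hsum : s + t + z = 0 :=
    (mul_eq_zero.1 (by linear_combination hs - ht : (s - t) * (s + t + z) = 0)).resolve_left
      (sub_ne_zero.2 hne)
  have : t = s⁻¹ := by
    have := ne_zero hs
    field_simp
    linear_combination -hs + s * hsum
  exact (im_inv_neg_of_im_pos hs_im).not_gt (this ▸ ht_im)

lemma norm_lt_one (hz : 0 < z.im) (hs : s ^ 2 + z * s + 1 = 0) (hs_im : 0 < s.im) :
    ‖s‖ < 1 := by
  have hn : 0 < normSq s := Complex.normSq_pos.2 (ne_zero hs)
  have hz_eq : z = -(s + s⁻¹) := by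
    have := ne_zero hs
    field_simp
    linear_combination hs
  have hz_im : z.im * normSq s = s.im * (1 - normSq s) := by
    rw [hz_eq]
    simp only [neg_im, add_im, inv_im]
    field_simp
    ring
  have : normSq s < 1 := by nlinarith
  rw [← Complex.sq_norm] at this
  nlinarith [norm_nonneg s]

lemma four_sub_sq_div_sub_eq {w u : ℂ} (hs : s ^ 2 + z * s + 1 = 0) (hw : w ≠ 0)
    (hu : w + w⁻¹ = u) (hw₁ : 1 + s * w ≠ 0) (hw₂ : 1 + s * w⁻¹ ≠ 0) (huz : u - z ≠ 0) :
    (4 - u ^ 2) / (u - z)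
      = -u + 2 * s + (1 - s ^ 2) * (w⁻¹ / (1 + s * w⁻¹) + w / (1 + s * w)) := by
  have hprod : (1 + s * w⁻¹) * (1 + s * w) = s * (u - z) := by
    rw [← hu]
    linear_combination hs + s ^ 2 * inv_mul_cancel₀ hw
  have hsum : w⁻¹ / (1 + s * w⁻¹) + w / (1 + s * w) = (u + 2 * s) / (s * (u - z)) := by
    rw [div_add_div _ _ hw₂ hw₁, hprod, ← hu]
    congr 1
    linear_combination 2 * s * inv_mul_cancel₀ hw
  have := ne_zero hs
  rw [hsum]
  field_simp
  linear_combination (2 * s - u) * hs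

lemma eq_neg_inv_add_iff (hs : s ≠ 0) : s = -(z + s)⁻¹ ↔ s ^ 2 + z * s + 1 = 0 := by
  rcases eq_or_ne (z + s) 0 with h | h
  · simp only [h, _root_.inv_zero, neg_zero, hs, false_iff]
    intro h'
    have : s * (z + s) + 1 = 0 := by linear_combination h'
    simp [h] at this
  · rw [← neg_eq_iff_eq_neg, ← mul_eq_one_iff_eq_inv₀ h]
    constructor <;> intro h' <;> linear_combination -h'

end QuadraticRoot

lemma stieltjesSC_eq_intervalIntegral (z : ℂ) :
    stieltjesSC z = ∫ x in (-2 : ℝ)..2,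
      (((2 * Real.pi)⁻¹ * Real.sqrt (4 - x ^ 2) : ℝ) : ℂ) * ((x : ℂ) - z)⁻¹ := by
  rw [stieltjesSC, semicircle, integral_withDensity_eq_integral_toReal_smul
    ((Measurable.ennreal_ofReal (by fun_prop)).indicator measurableSet_Icc)
    (ae_of_all _ fun x ↦ by by_cases hx : x ∈ Set.Icc (-2 : ℝ) 2 <;> simp [hx]),
    intervalIntegral.integral_of_le (by norm_num), ← integral_Icc_eq_integral_Ioc,
    ← integral_indicator measurableSet_Icc]
  congr 1 with x
  by_cases hx : x ∈ Set.Icc (-2 : ℝ) 2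
  · rw [Set.indicator_of_mem hx, Set.indicator_of_mem hx, ENNReal.toReal_ofReal (by positivity),
      Complex.real_smul]
  · simp [hx]

lemma integral_neg_two_two_eq_integral_zero_pi {E : Type*} [NormedAddCommGroup E] [NormedSpace ℝ E]
    {g : ℝ → E} (hg : Continuous g) :
    ∫ x in (-2 : ℝ)..2, g x = ∫ θ in (0 : ℝ)..Real.pi, (2 * Real.sin θ) • g (2 * Real.cos θ) := by
  have hderiv : ∀ θ ∈ Set.uIcc (0 : ℝ) Real.pi,
      HasDerivAt (fun θ ↦ 2 * Real.cos θ) (-(2 * Real.sin θ)) θ := fun θ _ ↦ by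
    simpa using (Real.hasDerivAt_cos θ).const_mul 2
  have := intervalIntegral.integral_deriv_smul_comp hderiv (by fun_prop) hg
  simp only [Real.cos_zero, Real.cos_pi, neg_smul, intervalIntegral.integral_neg] at this
  norm_num at this
  rw [intervalIntegral.integral_symm, ← this, neg_neg]

lemma ofReal_sub_ne_zero_of_im_pos {z : ℂ} (hz : 0 < z.im) (x : ℝ) : (x : ℂ) - z ≠ 0 := fun h ↦ by
  simpa [hz.ne'] using congrArg Complex.im h

lemma stieltjesSC_eq_integral_zero_pi {z : ℂ} (hz : 0 < z.im) :
    stieltjesSC z = (2 * Real.pi : ℂ)⁻¹ * ∫ θ in (0 : ℝ)..Real.pi,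
      (4 - ((2 * Real.cos θ : ℝ) : ℂ) ^ 2) / ((2 * Real.cos θ : ℝ) - z) := by
  have hg : Continuous fun x : ℝ ↦
      (((2 * Real.pi)⁻¹ * Real.sqrt (4 - x ^ 2) : ℝ) : ℂ) * ((x : ℂ) - z)⁻¹ :=
    (by fun_prop : Continuous _).mul (.inv₀ (by fun_prop) fun x ↦ ofReal_sub_ne_zero_of_im_pos hz x)
  rw [stieltjesSC_eq_intervalIntegral, integral_neg_two_two_eq_integral_zero_pi hg,
    ← intervalIntegral.integral_const_mul]
  refine intervalIntegral.integral_congr fun θ hθ ↦ ?_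
  rw [Set.uIcc_of_le Real.pi_pos.le] at hθ
  have hsin : 0 ≤ Real.sin θ := Real.sin_nonneg_of_nonneg_of_le_pi hθ.1 hθ.2
  have hsqrt :
      2 * Real.sin θ * Real.sqrt (4 - (2 * Real.cos θ) ^ 2) = 4 - (2 * Real.cos θ) ^ 2 := by
    rw [show 4 - (2 * Real.cos θ) ^ 2 = (2 * Real.sin θ) ^ 2 by
      linear_combination -4 * Real.sin_sq_add_cos_sq θ, Real.sqrt_sq (by positivity), sq]
  have hsqrt' : ((2 * Real.sin θ : ℝ) : ℂ) * (Real.sqrt (4 - (2 * Real.cos θ) ^ 2) : ℂ)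
      = 4 - ((2 * Real.cos θ : ℝ) : ℂ) ^ 2 := by
    exact_mod_cast hsqrt
  simp only [real_smul, ← hsqrt']
  push_cast
  ring

def semicirclePrimitive (s : ℂ) (θ : ℝ) : ℂ :=
  -2 * Real.sin θ + 2 * s * θ
    + I * (1 - s ^ 2) / s * (log (1 + s * exp (-θ * I)) - log (1 + s * exp (θ * I)))

lemma hasDerivAt_log_one_add_mul_exp {s : ℂ} (hs : ‖s‖ < 1) (θ : ℝ) :
    HasDerivAt (fun θ : ℝ ↦ log (1 + s * exp (θ * I)))
      (s * exp (θ * I) * I / (1 + s * exp (θ * I))) θ := by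
  have hexp : HasDerivAt (fun θ : ℝ ↦ exp (θ * I)) (exp (θ * I) * I) θ := by
    simpa using ((hasDerivAt_id θ).ofReal_comp.mul_const I).cexp
  have hmem : 1 + s * exp (θ * I) ∈ slitPlane :=
    mem_slitPlane_of_norm_lt_one (by simpa [norm_exp_ofReal_mul_I] using hs)
  simpa [mul_assoc] using ((hexp.const_mul s).const_add 1).clog_real hmem

lemma hasDerivAt_semicirclePrimitive {s : ℂ} (hs₀ : s ≠ 0) (hs : ‖s‖ < 1) (θ : ℝ) :
    HasDerivAt (semicirclePrimitive s)
      (-2 * Real.cos θ + 2 * s + (1 - s ^ 2) * (exp (-θ * I) / (1 + s * exp (-θ * I))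
        + exp (θ * I) / (1 + s * exp (θ * I)))) θ := by
  have hneg := (hasDerivAt_log_one_add_mul_exp hs (-θ)).scomp θ (hasDerivAt_neg θ)
  have hpos := hasDerivAt_log_one_add_mul_exp hs θ
  have hsin := (Real.hasDerivAt_sin θ).ofReal_comp
  have hlin : HasDerivAt (fun θ : ℝ ↦ 2 * s * θ) (2 * s) θ := by
    simpa using (hasDerivAt_id θ).ofReal_comp.const_mul (2 * s)
  refine ((((hsin.const_mul (-2)).add hlin).add
    ((hneg.sub hpos).const_mul (I * (1 - s ^ 2) / s))).congr_deriv ?_).congr_of_eventuallyEq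
    (.of_forall fun t ↦ by simp [semicirclePrimitive])
  rw [ofReal_neg, neg_one_smul]
  field_simp
  ring_nf
  simp only [I_sq]
  ring

lemma one_add_mul_ne_zero {s w : ℂ} (hs : ‖s‖ < 1) (hw : ‖w‖ = 1) : 1 + s * w ≠ 0 :=
  slitPlane_ne_zero (mem_slitPlane_of_norm_lt_one (by rwa [norm_mul, hw, mul_one]))

lemma integral_four_sub_sq_div_eq_of_root {z s : ℂ} (hz : 0 < z.im) (hs : s ^ 2 + z * s + 1 = 0)
    (hs₁ : ‖s‖ < 1) :
    ∫ θ in (0 : ℝ)..Real.pi, (4 - ((2 * Real.cos θ : ℝ) : ℂ) ^ 2) / ((2 * Real.cos θ : ℝ) - z)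
      = 2 * Real.pi * s := by
  have hderiv (θ : ℝ) : HasDerivAt (semicirclePrimitive s)
      ((4 - ((2 * Real.cos θ : ℝ) : ℂ) ^ 2) / ((2 * Real.cos θ : ℝ) - z)) θ := by
    refine (hasDerivAt_semicirclePrimitive (QuadraticRoot.ne_zero hs) hs₁ θ).congr_deriv ?_
    have hnorm : ‖exp (θ * I)‖ = 1 := norm_exp_ofReal_mul_I θ
    have hu : exp (θ * I) + (exp (θ * I))⁻¹ = ((2 * Real.cos θ : ℝ) : ℂ) := by
      rw [← exp_neg, ofReal_mul, ofReal_cos, cos]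
      push_cast
      ring_nf
    rw [neg_mul (θ : ℂ) I, exp_neg, QuadraticRoot.four_sub_sq_div_sub_eq hs (exp_ne_zero _) hu
      (one_add_mul_ne_zero hs₁ hnorm) (one_add_mul_ne_zero hs₁ (by rw [norm_inv, hnorm, inv_one]))
      (ofReal_sub_ne_zero_of_im_pos hz _)]
    push_cast
    ring
  have hcont : Continuous fun θ : ℝ ↦
      (4 - ((2 * Real.cos θ : ℝ) : ℂ) ^ 2) / ((2 * Real.cos θ : ℝ) - z) :=
    .div (by fun_prop) (by fun_prop) fun θ ↦ ofReal_sub_ne_zero_of_im_pos hz _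
  rw [intervalIntegral.integral_eq_sub_of_hasDerivAt (fun θ _ ↦ hderiv θ)
    (hcont.intervalIntegrable _ _)]
  simp only [semicirclePrimitive, ofReal_zero, Real.sin_pi, Real.sin_zero, neg_mul, exp_neg,
    exp_pi_mul_I, inv_neg, inv_one, zero_mul, neg_zero, exp_zero, sub_self]
  ring

lemma stieltjesSC_eq_of_root {z s : ℂ} (hz : 0 < z.im) (hs : s ^ 2 + z * s + 1 = 0)
    (hs_im : 0 < s.im) : stieltjesSC z = s := by
  have : (Real.pi : ℂ) ≠ 0 := ofReal_ne_zero.2 Real.pi_ne_zero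
  rw [stieltjesSC_eq_integral_zero_pi hz,
    integral_four_sub_sq_div_eq_of_root hz hs (QuadraticRoot.norm_lt_one hz hs hs_im)]
  field_simp

/-- For `Im z > 0`, there is exactly one `s` with `Im s > 0` satisfying
`s = -1/(z + s)`, and it is the Stieltjes transform `S_sc(z)` of the semicircle law:
`s` satisfies these conditions iff `s = S_sc(z)`. -/
theorem stieltjes_semicircle_unique (z : ℂ) (hz : 0 < z.im) :
    ∀ s : ℂ, (0 < s.im ∧ s = -(z + s)⁻¹) ↔ s = stieltjesSC z := by
  obtain ⟨s₀, hs₀, hs₀_im⟩ := QuadraticRoot.exists_im_pos hz.ne'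
  rw [stieltjesSC_eq_of_root hz hs₀ hs₀_im]
  intro s
  constructor
  · rintro ⟨hs_im, hs⟩
    rw [QuadraticRoot.eq_neg_inv_add_iff fun h ↦ by simp [h] at hs_im] at hs
    exact QuadraticRoot.eq_of_im_pos hs hs₀ hs_im hs₀_im
  · rintro rfl
    exact ⟨hs₀_im, (QuadraticRoot.eq_neg_inv_add_iff (QuadraticRoot.ne_zero hs₀)).2 hs₀⟩
end
end

section
/- Let a < b be reals, let ν and (μ_n)_{n≥1}, (μ'_n)_{n≥1} be Borel probability measures on ℝ, and let (ζ_n) be a sequence of positive reals with ζ_n → 0. Suppose μ_n converges weakly to ν as n → ∞ and that for all n, μ_n([a+ζ_n, b−ζ_n]) ≤ μ'_n([a,b]) ≤ μ_n([a−ζ_n, b+ζ_n]). Then limsup_{n→∞} |ν([a,b]) − μ'_n([a,b])| ≤ ν({a}) + ν({b}). -/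
/-!
Once `ζ n < δ`, the mass `μ' n [a,b]` is squeezed between `μ n [a+δ, b-δ]` and
`μ n [a-δ, b+δ]`. The portmanteau theorem for the closed set `[a-δ, b+δ]` and, through
complements, for the open set `(a,b)` (whose complement's closed `δ`-neighbourhood contains
`[a+δ, b-δ]ᶜ`) gives `ν (a,b) ≤ liminf μ' n [a,b] ≤ limsup μ' n [a,b] ≤ ν [a,b]` as `δ → 0`;
the gap `ν [a,b] - ν (a,b)` is the mass of the endpoints.
-/

open MeasureTheory ProbabilityTheory Filter Matrix
open scoped ENNReal

noncomputable section

open Set Metric Topology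

theorem WeakTendsto.limsup_measure_le_of_isClosed {ι : Type*} {L : Filter ι}
    {μ : ι → Measure ℝ} {ν : Measure ℝ} [IsProbabilityMeasure ν]
    (hμ : ∀ i, IsProbabilityMeasure (μ i)) (hw : WeakTendsto L μ ν) {F : Set ℝ}
    (hF : IsClosed F) :
    limsup (fun i => μ i F) L ≤ ν F := by
  let P : ι → ProbabilityMeasure ℝ := fun i => ⟨μ i, hμ i⟩
  let Q : ProbabilityMeasure ℝ := ⟨ν, inferInstance⟩
  have hPQ : Tendsto P L (𝓝 Q) :=
    ProbabilityMeasure.tendsto_iff_forall_integral_tendsto.2 fun f => hw f f.continuous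
      ⟨‖f‖, fun x => by simpa only [Real.norm_eq_abs] using f.norm_coe_le_norm x⟩
  exact ProbabilityMeasure.limsup_measure_closed_le_of_tendsto hPQ hF

section Thickening

variable {Ω ι : Type*} [PseudoMetricSpace Ω] [MeasurableSpace Ω] [OpensMeasurableSpace Ω]
  {L : Filter ι} {μ : Measure Ω} {μs : ι → Measure Ω}

theorem limsup_measure_le_of_eventually_subset_cthickening [IsFiniteMeasure μ]
    (h_closed : ∀ F, IsClosed F → limsup (fun i => μs i F) L ≤ μ F)
    {F : Set Ω} (hF : IsClosed F) {s : ι → Set Ω}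
    (hs : ∀ δ > 0, ∀ᶠ i in L, s i ⊆ cthickening δ F) :
    limsup (fun i => μs i (s i)) L ≤ μ F := by
  have hlim : Tendsto (fun δ => μ (cthickening δ F)) (𝓝[>] 0) (𝓝 (μ F)) :=
    (tendsto_measure_cthickening_of_isClosed ⟨1, one_pos, measure_ne_top μ _⟩ hF).mono_left
      nhdsWithin_le_nhds
  refine ge_of_tendsto hlim ?_
  filter_upwards [self_mem_nhdsWithin] with δ hδ
  calc limsup (fun i => μs i (s i)) L
      ≤ limsup (fun i => μs i (cthickening δ F)) L :=
        limsup_le_limsup ((hs δ hδ).mono fun i hi => measure_mono hi)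
    _ ≤ μ (cthickening δ F) := h_closed _ isClosed_cthickening

theorem le_liminf_measure_of_eventually_compl_subset_cthickening [L.NeBot]
    [IsProbabilityMeasure μ] [∀ i, IsProbabilityMeasure (μs i)]
    (h_closed : ∀ F, IsClosed F → limsup (fun i => μs i F) L ≤ μ F)
    {G : Set Ω} (hG : IsOpen G) {t : ι → Set Ω} (ht : ∀ i, MeasurableSet (t i))
    (hs : ∀ δ > 0, ∀ᶠ i in L, (t i)ᶜ ⊆ cthickening δ Gᶜ) :
    μ G ≤ liminf (fun i => μs i (t i)) L := by
  have hcompl := limsup_measure_le_of_eventually_subset_cthickening h_closed hG.isClosed_compl hs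
  calc μ G = 1 - μ Gᶜ := by rw [← prob_compl_eq_one_sub hG.measurableSet.compl, compl_compl]
    _ ≤ 1 - limsup (fun i => μs i (t i)ᶜ) L := tsub_le_tsub_left hcompl 1
    _ = liminf (fun i => 1 - μs i (t i)ᶜ) L := (ENNReal.liminf_const_sub _ _ ENNReal.one_ne_top).symm
    _ = liminf (fun i => μs i (t i)) L := by
      simp_rw [← prob_compl_eq_one_sub (ht _).compl, compl_compl]

end Thickening

theorem Icc_sub_add_subset_cthickening_Icc {a b δ : ℝ} (hab : a ≤ b) (hδ : 0 ≤ δ) :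
    Icc (a - δ) (b + δ) ⊆ cthickening δ (Icc a b) := by
  intro x ⟨hxa, hxb⟩
  refine mem_cthickening_of_dist_le x (max a (min x b)) δ _
    ⟨le_max_left _ _, max_le hab (min_le_right _ _)⟩ ?_
  rw [Real.dist_eq, abs_le]
  constructor <;> cases le_total x b <;> cases le_total a (min x b) <;> simp_all <;> linarith

theorem compl_Icc_add_sub_subset_cthickening_compl_Ioo {a b δ : ℝ} (hδ : 0 ≤ δ) :
    (Icc (a + δ) (b - δ))ᶜ ⊆ cthickening δ (Ioo a b)ᶜ := by
  intro x hx
  rcases not_and_or.1 hx with hxa | hxb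
  · refine mem_cthickening_of_dist_le x (min x a) δ _ (fun h => h.1.not_ge (min_le_right _ _)) ?_
    rw [Real.dist_eq, abs_le]
    constructor <;> cases le_total x a <;> simp_all <;> linarith
  · refine mem_cthickening_of_dist_le x (max x b) δ _ (fun h => h.2.not_ge (le_max_right _ _)) ?_
    rw [Real.dist_eq, abs_le]
    constructor <;> cases le_total x b <;> simp_all <;> linarith

theorem measureReal_Icc_sub_measureReal_Ioo_le (ν : Measure ℝ) [IsFiniteMeasure ν] {a b : ℝ}
    (hab : a ≤ b) :
    ν.real (Icc a b) - ν.real (Ioo a b) ≤ ν.real {a} + ν.real {b} := by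
  rw [← measureReal_sdiff Ioo_subset_Icc_self measurableSet_Ioo, Icc_sdiff_Ioo_same hab,
    insert_eq]
  exact measureReal_union_le _ _

theorem limsup_abs_sub_le_of_eventually {ι : Type*} {L : Filter ι} [L.NeBot] {x : ι → ℝ}
    {c m : ℝ} (hmc : m ≤ c) (h : ∀ ε > 0, ∀ᶠ i in L, m < x i + ε ∧ x i < c + ε) :
    limsup (fun i => |c - x i|) L ≤ c - m := by
  refine le_of_forall_pos_le_add fun ε hε => limsup_le_of_le
    (isCoboundedUnder_le_of_eventually_le L (.of_forall fun i => abs_nonneg _)) ?_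
  filter_upwards [h ε hε] with i ⟨hm, hc⟩
  exact abs_le.2 ⟨by linarith, by linarith⟩

theorem limsup_abs_toReal_sub_le {ι : Type*} {L : Filter ι} [L.NeBot] {x : ι → ℝ≥0∞}
    {c m : ℝ≥0∞} (hc : c ≠ ⊤) (hmc : m ≤ c) (hup : limsup x L ≤ c) (hlow : m ≤ liminf x L) :
    limsup (fun i => |c.toReal - (x i).toReal|) L ≤ c.toReal - m.toReal := by
  have hm : m ≠ ⊤ := ne_top_of_le_ne_top hc hmc
  refine limsup_abs_sub_le_of_eventually (ENNReal.toReal_mono hc hmc) fun ε hε => ?_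
  have hε' : 0 < ENNReal.ofReal ε := ENNReal.ofReal_pos.2 hε
  have hlow' : m + ENNReal.ofReal ε ≤ liminf (fun i => x i + ENNReal.ofReal ε) L := by
    rw [liminf_add_const L x _ (by isBoundedDefault) (by isBoundedDefault)]
    gcongr
  filter_upwards [eventually_lt_of_limsup_lt (hup.trans_lt (ENNReal.lt_add_right hc hε'.ne')),
    eventually_lt_of_lt_liminf ((ENNReal.lt_add_right hm hε'.ne').trans_le hlow')]
    with i hxc hmx
  have hx : x i ≠ ⊤ := ne_top_of_lt hxc
  have hxc' := ENNReal.toReal_strict_mono (by finiteness) hxc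
  have hmx' := ENNReal.toReal_strict_mono (by finiteness) hmx
  rw [ENNReal.toReal_add hc ENNReal.ofReal_ne_top, ENNReal.toReal_ofReal hε.le] at hxc'
  rw [ENNReal.toReal_add hx ENNReal.ofReal_ne_top, ENNReal.toReal_ofReal hε.le] at hmx'
  exact ⟨hmx', hxc'⟩

theorem limsup_interval_mass_le_general
    (a b : ℝ) (hab : a < b)
    (ν : Measure ℝ) [IsProbabilityMeasure ν]
    (μ μ' : ℕ → Measure ℝ)
    (hμ : ∀ n, IsProbabilityMeasure (μ n))
    (ζ : ℕ → ℝ) (hζ : Tendsto ζ atTop (nhds 0))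
    (hw : WeakTendsto atTop μ ν)
    (hsand : ∀ n, μ n (Set.Icc (a + ζ n) (b - ζ n)) ≤ μ' n (Set.Icc a b) ∧
      μ' n (Set.Icc a b) ≤ μ n (Set.Icc (a - ζ n) (b + ζ n))) :
    Filter.limsup
        (fun n => |(ν (Set.Icc a b)).toReal - (μ' n (Set.Icc a b)).toReal|) atTop ≤
      (ν {a}).toReal + (ν {b}).toReal := by
  have h_closed := fun F (hF : IsClosed F) => hw.limsup_measure_le_of_isClosed hμ hF
  have hζ_lt : ∀ δ > 0, ∀ᶠ n in atTop, ζ n < δ := fun δ hδ => hζ.eventually_lt_const hδ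
  have hup : limsup (fun n => μ' n (Icc a b)) atTop ≤ ν (Icc a b) :=
    (limsup_le_limsup (.of_forall fun n => (hsand n).2)).trans <|
      limsup_measure_le_of_eventually_subset_cthickening h_closed isClosed_Icc fun δ hδ =>
        (hζ_lt δ hδ).mono fun n hn => (Icc_subset_Icc (by linarith) (by linarith)).trans
          (Icc_sub_add_subset_cthickening_Icc hab.le hδ.le)
  have hlow : ν (Ioo a b) ≤ liminf (fun n => μ' n (Icc a b)) atTop := by
    have := hμ
    refine (le_liminf_measure_of_eventually_compl_subset_cthickening h_closed isOpen_Ioo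
      (fun _ => measurableSet_Icc) fun δ hδ => (hζ_lt δ hδ).mono fun n hn => ?_).trans
      (liminf_le_liminf (.of_forall fun n => (hsand n).1))
    exact (compl_subset_compl.2 (Icc_subset_Icc (by linarith) (by linarith))).trans
      (compl_Icc_add_sub_subset_cthickening_compl_Ioo hδ.le)
  calc _ ≤ ν.real (Icc a b) - ν.real (Ioo a b) :=
        limsup_abs_toReal_sub_le (measure_ne_top _ _) (measure_mono Ioo_subset_Icc_self) hup hlow
    _ ≤ _ := measureReal_Icc_sub_measureReal_Ioo_le ν hab.le

/-- If `μ_n → ν` weakly and `μ_n([a+ζ_n, b-ζ_n]) ≤ μ'_n([a,b]) ≤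
μ_n([a-ζ_n, b+ζ_n])` with `ζ_n → 0`, then
`limsup_n |ν([a,b]) - μ'_n([a,b])| ≤ ν({a}) + ν({b})`. -/
theorem limsup_interval_mass_le
    (a b : ℝ) (hab : a < b)
    (ν : Measure ℝ) [IsProbabilityMeasure ν]
    (μ μ' : ℕ → Measure ℝ)
    (hμ : ∀ n, IsProbabilityMeasure (μ n)) (hμ' : ∀ n, IsProbabilityMeasure (μ' n))
    (ζ : ℕ → ℝ) (hζpos : ∀ n, 0 < ζ n) (hζ : Tendsto ζ atTop (nhds 0))
    (hw : WeakTendsto atTop μ ν)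
    (hsand : ∀ n, μ n (Set.Icc (a + ζ n) (b - ζ n)) ≤ μ' n (Set.Icc a b) ∧
      μ' n (Set.Icc a b) ≤ μ n (Set.Icc (a - ζ n) (b + ζ n))) :
    Filter.limsup
        (fun n => |(ν (Set.Icc a b)).toReal - (μ' n (Set.Icc a b)).toReal|) atTop ≤
      (ν {a}).toReal + (ν {b}).toReal :=
  limsup_interval_mass_le_general a b hab ν μ μ' hμ ζ hζ hw hsand

end
end

section
/- Let Q ≥ 5 be an integer, set l := 4/Q, and define the partition points a_q := −2 + (q−1)l for q = 1, …, Q+1, so that [−2,2] is partitioned into Q intervals of equal length l. Then min_{1≤q≤Q} ρ_sc([a_q, a_{q+1}]) = ρ_sc([2−l, 2]) = (1/(2π))∫_{2−l}^{2} √(4−x²) dx ≥ l^{3/2}/(π√3). -/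
/-! The density is symmetric and decreasing in `|x|`, so among intervals of a fixed length `l`
inside `[-2, 2]` the edge interval `[2 - l, 2]` carries the least mass: sliding `[a, a + l]` to
the right trades `[a, 2 - l]` for its translate `[a + l, 2]`, where the density is pointwise
smaller as soon as `a ≥ -l/2`, and the case `a < -l/2` reduces to this one by reflection.
Near the edge `4 - x² = (2 - x)(2 + x) ≥ 3(2 - x)`, and integrating `√(3(2 - x))` gives the
lower bound `l^{3/2}/(π√3)`. -/

open MeasureTheory ProbabilityTheory Filter Matrix
open scoped ENNReal

noncomputable section

/-- `√(4 - x²)` already vanishes off `[-2, 2]`, so no indicator is needed. -/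
def semicircleDensity (x : ℝ) : ℝ := (2 * Real.pi)⁻¹ * Real.sqrt (4 - x ^ 2)

namespace semicircleDensity

@[fun_prop]
lemma continuous : Continuous semicircleDensity := by
  unfold semicircleDensity
  fun_prop

lemma nonneg (x : ℝ) : 0 ≤ semicircleDensity x := by
  unfold semicircleDensity
  positivity

lemma intervalIntegrable (a b : ℝ) : IntervalIntegrable semicircleDensity volume a b :=
  continuous.intervalIntegrable a b

lemma neg (x : ℝ) : semicircleDensity (-x) = semicircleDensity x := by
  simp only [semicircleDensity, neg_sq]

lemma le_of_sq_le {x y : ℝ} (h : x ^ 2 ≤ y ^ 2) :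
    semicircleDensity y ≤ semicircleDensity x := by
  unfold semicircleDensity
  gcongr

end semicircleDensity

lemma semicircle_eq_withDensity :
    semicircle = volume.withDensity fun x => ENNReal.ofReal (semicircleDensity x) := by
  unfold semicircle
  congr 1
  funext x
  by_cases hx : x ∈ Set.Icc (-2 : ℝ) 2
  · rw [Set.indicator_of_mem hx, semicircleDensity]
  · have h4 : 4 - x ^ 2 ≤ 0 := by
      simp only [Set.mem_Icc, not_and_or, not_le] at hx
      rcases hx with hx | hx <;> nlinarith
    rw [Set.indicator_of_notMem hx, semicircleDensity, Real.sqrt_eq_zero_of_nonpos h4, mul_zero,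
      ENNReal.ofReal_zero]

lemma semicircle_Icc_toReal {a b : ℝ} (hab : a ≤ b) :
    (semicircle (Set.Icc a b)).toReal = ∫ x in a..b, semicircleDensity x := by
  rw [semicircle_eq_withDensity, withDensity_apply _ measurableSet_Icc,
    ← ofReal_integral_eq_lintegral_ofReal
      (semicircleDensity.continuous.integrableOn_Icc) (.of_forall semicircleDensity.nonneg),
    ENNReal.toReal_ofReal (integral_nonneg semicircleDensity.nonneg),
    intervalIntegral.integral_of_le hab, integral_Icc_eq_integral_Ioc]

lemma integral_semicircleDensity_neg (a b : ℝ) :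
    ∫ x in -b..-a, semicircleDensity x = ∫ x in a..b, semicircleDensity x := by
  simp only [← intervalIntegral.integral_comp_neg, semicircleDensity.neg]

lemma integral_semicircleDensity_edge_le_of_neg_half_le {a l : ℝ} (hl : 0 ≤ l)
    (ha : -(l / 2) ≤ a) (hal : a ≤ 2 - l) :
    ∫ x in (2 - l)..2, semicircleDensity x ≤ ∫ x in a..(a + l), semicircleDensity x := by
  have hI := semicircleDensity.intervalIntegrable
  have hshift : ∫ x in (a + l)..2, semicircleDensity x
      = ∫ x in a..(2 - l), semicircleDensity (x + l) := by
    rw [intervalIntegral.integral_comp_add_right, sub_add_cancel]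
  have hpointwise : ∫ x in a..(2 - l), semicircleDensity (x + l)
      ≤ ∫ x in a..(2 - l), semicircleDensity x := by
    refine intervalIntegral.integral_mono_on hal
      ((semicircleDensity.continuous.comp (continuous_add_const l)).intervalIntegrable _ _)
      (hI _ _) fun x hx => ?_
    exact semicircleDensity.le_of_sq_le (by nlinarith [hx.1])
  rw [← intervalIntegral.integral_add_adjacent_intervals (hI a (2 - l)) (hI (2 - l) (a + l)),
    ← intervalIntegral.integral_add_adjacent_intervals (hI (2 - l) (a + l)) (hI (a + l) 2)]
  linarith

lemma integral_semicircleDensity_edge_le {a l : ℝ} (hl : 0 ≤ l) (ha : -2 ≤ a)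
    (hal : a ≤ 2 - l) :
    ∫ x in (2 - l)..2, semicircleDensity x ≤ ∫ x in a..(a + l), semicircleDensity x := by
  rcases le_or_gt (-(l / 2)) a with h | h
  · exact integral_semicircleDensity_edge_le_of_neg_half_le hl h hal
  · have hreflected := integral_semicircleDensity_edge_le_of_neg_half_le (a := -a - l) hl
      (by linarith) (by linarith)
    rwa [sub_add_cancel, show -a - l = -(a + l) by ring, integral_semicircleDensity_neg]
      at hreflected

lemma semicircle_Icc_edge_le {a l : ℝ} (hl : 0 ≤ l) (ha : -2 ≤ a) (hal : a ≤ 2 - l) :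
    (semicircle (Set.Icc (2 - l) 2)).toReal ≤ (semicircle (Set.Icc a (a + l))).toReal := by
  rw [semicircle_Icc_toReal (by linarith), semicircle_Icc_toReal (by linarith)]
  exact integral_semicircleDensity_edge_le hl ha hal

lemma integral_sqrt_sub (c l : ℝ) :
    ∫ x in (c - l)..c, Real.sqrt (c - x) = 2 / 3 * l ^ ((3 : ℝ) / 2) := by
  rw [intervalIntegral.integral_comp_sub_left (fun x => Real.sqrt x), sub_self, sub_sub_cancel]
  simp only [Real.sqrt_eq_rpow]
  rw [integral_rpow (Or.inl (by norm_num)), Real.zero_rpow (by norm_num)]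
  norm_num
  ring

lemma rpow_three_halves_div_le_integral_semicircleDensity {l : ℝ} (hl0 : 0 ≤ l) (hl1 : l ≤ 1) :
    l ^ ((3 : ℝ) / 2) / (Real.pi * Real.sqrt 3) ≤ ∫ x in (2 - l)..2, semicircleDensity x := by
  have h3 : Real.sqrt 3 * Real.sqrt 3 = 3 := Real.mul_self_sqrt (by norm_num)
  have hpos : 0 < Real.pi * Real.sqrt 3 := by positivity
  have hmodel : ∫ x in (2 - l)..2, (2 * Real.pi)⁻¹ * Real.sqrt (3 * (2 - x))
      = l ^ ((3 : ℝ) / 2) / (Real.pi * Real.sqrt 3) := by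
    simp only [Real.sqrt_mul (show (0 : ℝ) ≤ 3 by norm_num)]
    rw [intervalIntegral.integral_const_mul, intervalIntegral.integral_const_mul,
      integral_sqrt_sub 2 l, eq_div_iff hpos.ne']
    field_simp
    linear_combination l ^ ((3 : ℝ) / 2) * h3
  rw [← hmodel]
  refine intervalIntegral.integral_mono_on (by linarith)
    (Continuous.intervalIntegrable (by fun_prop) _ _)
    (semicircleDensity.intervalIntegrable _ _) fun x hx => ?_
  unfold semicircleDensity
  gcongr
  nlinarith [hx.1, hx.2]

/-- Partition `[-2,2]` into `Q ≥ 5` intervals `[a_q, a_{q+1}]` of equal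
length `l = 4/Q`, where `a_q = -2 + (q-1)l`. The minimal semicircle mass among them is the
mass of the edge interval `[2-l, 2]`, which equals `(2π)⁻¹ ∫_{2-l}^2 √(4-x²) dx` and is at
least `l^{3/2}/(π√3)`. -/
theorem semicircle_edge_interval_bound (Q : ℕ) (hQ : 5 ≤ Q) :
    (∀ q : ℕ, 1 ≤ q → q ≤ Q →
      (semicircle (Set.Icc (2 - 4 / (Q : ℝ)) 2)).toReal ≤
        (semicircle (Set.Icc (-2 + ((q : ℝ) - 1) * (4 / (Q : ℝ)))
          (-2 + (q : ℝ) * (4 / (Q : ℝ))))).toReal) ∧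
    (semicircle (Set.Icc (2 - 4 / (Q : ℝ)) 2)).toReal =
      (2 * Real.pi)⁻¹ * ∫ x in (2 - 4 / (Q : ℝ))..2, Real.sqrt (4 - x ^ 2) ∧
    (4 / (Q : ℝ)) ^ ((3 : ℝ) / 2) / (Real.pi * Real.sqrt 3) ≤
      (semicircle (Set.Icc (2 - 4 / (Q : ℝ)) 2)).toReal := by
  set l : ℝ := 4 / Q with hl_def
  have hQ5 : (5 : ℝ) ≤ Q := by exact_mod_cast hQ
  have hl0 : 0 ≤ l := by positivity
  have hl1 : l ≤ 1 := by rw [hl_def, div_le_one (by linarith)]; linarith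
  have hQl : (Q : ℝ) * l = 4 := by rw [hl_def]; field_simp
  have hedge := semicircle_Icc_toReal (show 2 - l ≤ 2 by linarith)
  refine ⟨fun q hq1 hqQ => ?_, ?_, ?_⟩
  · have hq1' : (1 : ℝ) ≤ q := by exact_mod_cast hq1
    have hqQ' : (q : ℝ) ≤ Q := by exact_mod_cast hqQ
    rw [show -2 + (q : ℝ) * l = -2 + ((q : ℝ) - 1) * l + l by ring]
    exact semicircle_Icc_edge_le hl0 (by nlinarith) (by nlinarith)
  · rw [hedge, ← intervalIntegral.integral_const_mul]
    rfl
  · rw [hedge]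
    exact rpow_three_halves_div_le_integral_semicircleDensity hl0 hl1

end
end

section
/- Let n ≥ 2 and let H be an n×n real symmetric matrix written in block form H = [[a, Xᵀ],[X, H̃]] with a ∈ ℝ, X ∈ ℝ^{n−1}, and H̃ an (n−1)×(n−1) real symmetric matrix. Let Λ be an eigenvalue of H with a unit eigenvector (x, v), where x ∈ ℝ and v ∈ ℝ^{n−1}, and assume Λ is not an eigenvalue of H̃. Let Λ_1(H̃) ≤ ⋯ ≤ Λ_{n−1}(H̃) be the eigenvalues of H̃ and {u_j(H̃)}_{j=1}^{n−1} any orthonormal basis of ℝ^{n−1} with H̃ u_j(H̃) = Λ_j(H̃) u_j(H̃). Then x² = 1 / (1 + ∑_{j=1}^{n−1} (Λ_j(H̃) − Λ)^{−2} ⟨u_j(H̃), X⟩²), where ⟨·,·⟩ is the Euclidean inner product. -/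
open MeasureTheory ProbabilityTheory Filter Matrix
open scoped ENNReal

noncomputable section

/-!
Write `w = (x, v)` and `X` for the first column of `H` below the diagonal. Rows `2, …, n + 1`
of `H w = Λ w` read `H̃ v + x X = Λ v`. Pairing with `u_j` and moving `H̃` across by symmetry
gives `(μ_j - Λ) ⟨u_j, v⟩ = -x ⟨u_j, X⟩`, so `⟨u_j, v⟩² = x² (μ_j - Λ)⁻² ⟨u_j, X⟩²`. Summing over
the orthonormal basis `u_j` (Parseval) turns `1 - x² = ‖v‖²` into
`1 - x² = x² ∑_j (μ_j - Λ)⁻² ⟨u_j, X⟩²`.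
-/

namespace Matrix

theorem mulVec_succ_apply {R : Type*} [NonUnitalNonAssocSemiring R] {n : ℕ}
    (H : Matrix (Fin (n + 1)) (Fin (n + 1)) R) (w : Fin (n + 1) → R) (k : Fin n) :
    (H *ᵥ w) k.succ = H k.succ 0 * w 0 + (H.submatrix Fin.succ Fin.succ *ᵥ Fin.tail w) k := by
  simp only [mulVec, dotProduct, Fin.sum_univ_succ, submatrix_apply, Fin.tail]

theorem IsSymm.mulVec_dotProduct {R ι : Type*} [CommSemiring R] [Fintype ι]
    {A : Matrix ι ι R} (hA : A.IsSymm) (u v : ι → R) :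
    A *ᵥ u ⬝ᵥ v = u ⬝ᵥ A *ᵥ v := by
  rw [dotProduct_mulVec, ← mulVec_transpose, hA.eq]

theorem IsSymm.sub_mul_dotProduct_of_mulVec_add_eq_smul {R ι : Type*} [CommRing R] [Fintype ι]
    {A : Matrix ι ι R} (hA : A.IsSymm) {u v y : ι → R} {μ Λ : R}
    (hu : A *ᵥ u = μ • u) (hv : A *ᵥ v + y = Λ • v) :
    (μ - Λ) * (u ⬝ᵥ v) = -(u ⬝ᵥ y) := by
  have h := hA.mulVec_dotProduct u v
  rw [hu, eq_sub_of_add_eq hv, smul_dotProduct, dotProduct_sub, dotProduct_smul] at h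
  simp only [smul_eq_mul] at h
  linear_combination h

theorem dotProduct_mulVec_self_of_mul_transpose_eq_one {R ι : Type*} [CommRing R] [Fintype ι]
    [DecidableEq ι] {U : Matrix ι ι R} (hU : U * Uᵀ = 1) (v : ι → R) :
    U *ᵥ v ⬝ᵥ U *ᵥ v = v ⬝ᵥ v := by
  rw [dotProduct_mulVec, ← mulVec_transpose, mulVec_mulVec, mul_eq_one_comm.mp hU, one_mulVec]

end Matrix

theorem sq_eq_one_div_of_sq_add_sum_sq_eq_one {ι : Type*} [Fintype ι] {x : ℝ} {c d e : ι → ℝ}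
    (hd : ∀ j, d j ≠ 0) (hc : ∀ j, d j * c j = -(x * e j)) (hnorm : x ^ 2 + ∑ j, c j ^ 2 = 1) :
    x ^ 2 = 1 / (1 + ∑ j, (d j ^ 2)⁻¹ * e j ^ 2) := by
  have hc_sq (j : ι) : c j ^ 2 = x ^ 2 * ((d j ^ 2)⁻¹ * e j ^ 2) := by
    rw [inv_mul_eq_div, mul_div_assoc', eq_div_iff (pow_ne_zero 2 (hd j))]
    linear_combination (d j * c j - x * e j) * hc j
  have hS : 0 ≤ ∑ j, (d j ^ 2)⁻¹ * e j ^ 2 := by positivity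
  rw [Finset.sum_congr rfl fun j _ => hc_sq j, ← Finset.mul_sum] at hnorm
  rw [eq_div_iff (by positivity)]
  linarith

theorem eigenvector_first_coordinate_formula_general
    (n : ℕ) (H : Matrix (Fin (n + 1)) (Fin (n + 1)) ℝ)
    (hH : H.IsSymm)
    (Λ : ℝ) (w : Fin (n + 1) → ℝ)
    (hw : ∑ i, w i ^ 2 = 1)
    (heig : H.mulVec w = Λ • w)
    (μ : Fin n → ℝ)
    (u : Fin n → (Fin n → ℝ))
    (hortho : ∀ i j : Fin n, ∑ k, u i k * u j k = if i = j then 1 else 0)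
    (heigu : ∀ j : Fin n, (H.submatrix Fin.succ Fin.succ).mulVec (u j) = μ j • u j)
    (hΛ : ∀ j : Fin n, μ j ≠ Λ) :
    (w 0) ^ 2 =
      1 / (1 + ∑ j : Fin n,
        ((μ j - Λ) ^ 2)⁻¹ * (∑ k : Fin n, u j k * H (Fin.succ k) 0) ^ 2) := by
  set X : Fin n → ℝ := fun k => H k.succ 0
  have hrow : H.submatrix Fin.succ Fin.succ *ᵥ Fin.tail w + w 0 • X = Λ • Fin.tail w := by
    ext k
    have h := congrFun heig k.succ
    rw [mulVec_succ_apply] at h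
    simp only [Pi.add_apply, Pi.smul_apply, smul_eq_mul, Fin.tail] at h ⊢
    linear_combination h
  have hproj (j : Fin n) : (μ j - Λ) * (u j ⬝ᵥ Fin.tail w) = -(w 0 * (u j ⬝ᵥ X)) := by
    have h := (hH.submatrix _).sub_mul_dotProduct_of_mulVec_add_eq_smul (heigu j) hrow
    rwa [dotProduct_smul, smul_eq_mul] at h
  have hU : of u * (of u)ᵀ = 1 := by
    ext i j
    simpa [mul_apply, one_apply] using hortho i j
  have hnorm : w 0 ^ 2 + ∑ j, (u j ⬝ᵥ Fin.tail w) ^ 2 = 1 := by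
    rw [← hw, Fin.sum_univ_succ]
    congr 1
    calc ∑ j, (u j ⬝ᵥ Fin.tail w) ^ 2 = of u *ᵥ Fin.tail w ⬝ᵥ of u *ᵥ Fin.tail w := by
          simp only [dotProduct, sq]; rfl
      _ = Fin.tail w ⬝ᵥ Fin.tail w := dotProduct_mulVec_self_of_mul_transpose_eq_one hU _
      _ = ∑ k : Fin n, w k.succ ^ 2 := by simp only [dotProduct, sq]; rfl
  exact sq_eq_one_div_of_sq_add_sum_sq_eq_one (fun j => sub_ne_zero.mpr (hΛ j)) hproj hnorm

/-- (Eq. (5.8) of Erdős–Schlein–Yau / Lemma 41 of Tao–Vu.)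
Write the `(n+1) × (n+1)` real symmetric matrix `H` in block form with upper-left entry
`a = H 0 0`, first column `X = (H (k+1) 0)_k`, and minor `H̃ = H.submatrix Fin.succ Fin.succ`.
If `(x, v)` is a unit eigenvector of `H` with eigenvalue `Λ`, the eigenvalues `μ_1 ≤ ⋯ ≤ μ_n`
of `H̃` avoid `Λ`, and `u_j` is an orthonormal eigenbasis of `H̃` with `H̃ u_j = μ_j u_j`, then
`x² = 1/(1 + ∑_j (μ_j - Λ)⁻² ⟨u_j, X⟩²)`. -/
theorem eigenvector_first_coordinate_formula
    (n : ℕ) (hn : 1 ≤ n) (H : Matrix (Fin (n + 1)) (Fin (n + 1)) ℝ)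
    (hH : H.IsSymm)
    (Λ : ℝ) (w : Fin (n + 1) → ℝ)
    (hw : ∑ i, w i ^ 2 = 1)
    (heig : H.mulVec w = Λ • w)
    (μ : Fin n → ℝ) (hμ : Monotone μ)
    (u : Fin n → (Fin n → ℝ))
    (hortho : ∀ i j : Fin n, ∑ k, u i k * u j k = if i = j then 1 else 0)
    (heigu : ∀ j : Fin n, (H.submatrix Fin.succ Fin.succ).mulVec (u j) = μ j • u j)
    (hΛ : ∀ j : Fin n, μ j ≠ Λ) :
    (w 0) ^ 2 =
      1 / (1 + ∑ j : Fin n,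
        ((μ j - Λ) ^ 2)⁻¹ * (∑ k : Fin n, u j k * H (Fin.succ k) 0) ^ 2) :=
  eigenvector_first_coordinate_formula_general n H hH Λ w hw heig μ u hortho heigu hΛ

end
end
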